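/- arXiv:2212.01784 — 8 statements merged into one kernel-verified Lean document; each statement's English description precedes it below -/
import Mathlib

section
/- Suppose π is a stationary distribution of the transition matrix P with finite first moment, i.e. ∑_{x∈ℕ^{n−1}} π(x)|x| < ∞. Then ∑_{x∈R_0} π(x) = k/(n(k−n+1)). Consequently, for any swapping success probability q ∈ (0,1] and link rate μ > 0, the switch capacity C := q·μ·(k−(n−1))·∑_{x∈R_0} π(x) equals q·μ·k/n. -/
open scoped Classical BigOperators

noncomputable section

/-- Number of zero entries of a state `x ∈ ℕ^(n-1)`. -/
def numZeros {n : ℕ} (x : Fin (n-1) → ℕ) : ℕ :=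
  (Finset.univ.filter (fun i => x i = 0)).card

/-- The state `x + e_l`. -/
def addE {n : ℕ} (x : Fin (n-1) → ℕ) (l : Fin (n-1)) : Fin (n-1) → ℕ :=
  Function.update x l (x l + 1)

/-- The state `x - 1` (componentwise). -/
def subOne {n : ℕ} (x : Fin (n-1) → ℕ) : Fin (n-1) → ℕ := fun i => x i - 1

/-- The transition matrix `P` of the chain. -/
noncomputable def P (n k : ℕ) (x y : Fin (n-1) → ℕ) : ℝ :=
  if numZeros x = 0 then
    (if y = subOne x then ((k:ℝ) - n + 1) / k
     else if ∃ l, y = addE x l then 1 / k else 0)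
  else if numZeros x = n - 1 then
    (if ∃ l, y = addE x l then 1 / ((n:ℝ) - 1) else 0)
  else
    (if ∃ l, x l = 0 ∧ y = addE x l then
        ((k:ℝ) - n + 1 + numZeros x) / (k * numZeros x)
     else if ∃ l, 1 ≤ x l ∧ y = addE x l then 1 / k
     else 0)

/-- `π` is a stationary distribution of `P`. -/
def IsStationaryP (n k : ℕ) (π : (Fin (n-1) → ℕ) → ℝ) : Prop :=
  (∀ x, 0 ≤ π x) ∧ Summable π ∧ (∑' x, π x) = 1 ∧
  ∀ y, Summable (fun x => π x * P n k x y) ∧ (∑' x, π x * P n k x y) = π y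

namespace Aux

variable {n k : ℕ}

lemma addE_apply_self (x : Fin (n-1) → ℕ) (l : Fin (n-1)) : addE x l l = x l + 1 := by
  simp [addE]

lemma addE_apply_ne (x : Fin (n-1) → ℕ) {l i : Fin (n-1)} (h : i ≠ l) : addE x l i = x i := by
  simp [addE, Function.update_of_ne h]

lemma addE_inj (x : Fin (n-1) → ℕ) : Function.Injective (addE x) := by
  intro l l' h
  by_contra hne
  have h1 := congrFun h l
  rw [addE_apply_self, addE_apply_ne x hne] at h1
  omega

lemma fsum_addE (x : Fin (n-1) → ℕ) (l : Fin (n-1)) :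
    (∑ i, ((addE x l i : ℕ) : ℝ)) = (∑ i, (x i : ℝ)) + 1 := by
  have h : ∀ i, ((addE x l i : ℕ) : ℝ) = (x i : ℝ) + (if i = l then 1 else 0) := by
    intro i
    by_cases h : i = l
    · subst h; rw [addE_apply_self]; simp
    · rw [addE_apply_ne x h, if_neg h]; simp
  simp only [h]
  rw [Finset.sum_add_distrib, Finset.sum_ite_eq' Finset.univ l, if_pos (Finset.mem_univ l)]


lemma numZeros_eq_zero_iff (x : Fin (n-1) → ℕ) : numZeros x = 0 ↔ ∀ i, 1 ≤ x i := by
  rw [numZeros, Finset.card_eq_zero, Finset.filter_eq_empty_iff]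
  constructor
  · intro h i; have := h (Finset.mem_univ i); omega
  · intro h i _; have := h i; omega

lemma eq_zero_of_numZeros_max (x : Fin (n-1) → ℕ) (h : numZeros x = n - 1) : ∀ i, x i = 0 := by
  unfold numZeros at h
  have hcard : (Finset.univ.filter (fun i => x i = 0)) = Finset.univ := by
    apply Finset.eq_univ_of_card
    rw [h, Fintype.card_fin]
  intro i
  have hi : i ∈ Finset.univ.filter (fun i => x i = 0) := by
    rw [hcard]; exact Finset.mem_univ i
  exact (Finset.mem_filter.mp hi).2

lemma numZeros_le (x : Fin (n-1) → ℕ) : numZeros x ≤ n - 1 := by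
  calc numZeros x ≤ Finset.univ.card := Finset.card_filter_le _ _
  _ = n - 1 := by rw [Finset.card_univ, Fintype.card_fin]

lemma fsum_subOne (x : Fin (n-1) → ℕ) (hx : ∀ i, 1 ≤ x i) (hn : 3 ≤ n) :
    (∑ i, ((subOne x i : ℕ) : ℝ)) = (∑ i, (x i : ℝ)) - ((n : ℝ) - 1) := by
  have h : ∀ i, ((subOne x i : ℕ) : ℝ) = (x i : ℝ) - 1 := by
    intro i
    have := hx i
    simp only [subOne]
    push_cast [Nat.cast_sub (hx i)]
    ring
  simp only [h]
  rw [Finset.sum_sub_distrib]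
  simp only [Finset.sum_const, Finset.card_univ, Fintype.card_fin, nsmul_eq_mul, mul_one]
  have : ((n - 1 : ℕ) : ℝ) = (n : ℝ) - 1 := by
    push_cast [Nat.cast_sub (by omega : 1 ≤ n)]; ring
  rw [this]

lemma subOne_ne_addE (x : Fin (n-1) → ℕ) (hx : ∀ i, 1 ≤ x i) (hn : 3 ≤ n) (l : Fin (n-1)) :
    subOne x ≠ addE x l := by
  haveI : Nontrivial (Fin (n-1)) := Fin.nontrivial_iff_two_le.mpr (by omega)
  obtain ⟨i, hi⟩ := exists_ne l
  intro h
  have := congrFun h i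
  rw [addE_apply_ne x hi] at this
  have h1 := hx i
  simp only [subOne] at this
  omega

lemma P_nonneg (hn : 3 ≤ n) (hk : n ≤ k) (x y : Fin (n-1) → ℕ) : 0 ≤ P n k x y := by
  have hk3 : (3:ℝ) ≤ (k:ℝ) := by exact_mod_cast le_trans hn hk
  have hnk : (n:ℝ) ≤ (k:ℝ) := by exact_mod_cast hk
  have hn3 : (3:ℝ) ≤ (n:ℝ) := by exact_mod_cast hn
  have hj : (0:ℝ) ≤ (numZeros x : ℝ) := Nat.cast_nonneg _
  unfold P
  split_ifs
  · exact div_nonneg (by linarith) (by linarith)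
  · positivity
  · exact le_rfl
  · exact div_nonneg zero_le_one (by linarith)
  · exact le_rfl
  · exact div_nonneg (by linarith) (by positivity)
  · positivity
  · exact le_rfl

lemma P_support (x y : Fin (n-1) → ℕ) (h : P n k x y ≠ 0) :
    y = subOne x ∨ ∃ l, y = addE x l := by
  unfold P at h
  split_ifs at h <;>
    first
    | exact absurd rfl h
    | (left; assumption)
    | (right; assumption)
    | (right
       rename_i hl
       obtain ⟨l, _, h2⟩ := hl
       exact ⟨l, h2⟩)


lemma P_support' (x y : Fin (n-1) → ℕ) (h0 : numZeros x ≠ 0) (h : P n k x y ≠ 0) :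
    ∃ l, y = addE x l := by
  unfold P at h
  rw [if_neg h0] at h
  split_ifs at h <;>
    first
    | exact absurd rfl h
    | (rename_i hc; exact hc)
    | (rename_i hc
       obtain ⟨l, _, h2⟩ := hc
       exact ⟨l, h2⟩)

lemma P_subOne_eq (x : Fin (n-1) → ℕ) (h0 : numZeros x = 0) :
    P n k x (subOne x) = ((k:ℝ) - (n:ℝ) + 1)/k := by
  unfold P; rw [if_pos h0, if_pos rfl]

lemma P_addE_R0 (hn : 3 ≤ n) (x : Fin (n-1) → ℕ) (h0 : numZeros x = 0) (l : Fin (n-1)) :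
    P n k x (addE x l) = 1/k := by
  have hx := (numZeros_eq_zero_iff x).mp h0
  unfold P
  rw [if_pos h0, if_neg (fun h => subOne_ne_addE x hx hn l h.symm), if_pos ⟨l, rfl⟩]

lemma P_addE_max (x : Fin (n-1) → ℕ) (h0 : numZeros x ≠ 0) (hB : numZeros x = n - 1)
    (l : Fin (n-1)) : P n k x (addE x l) = 1/((n:ℝ) - 1) := by
  unfold P
  rw [if_neg h0, if_pos hB, if_pos ⟨l, rfl⟩]

lemma P_addE_mid (x : Fin (n-1) → ℕ) (h0 : numZeros x ≠ 0) (hB : numZeros x ≠ n - 1)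
    (l : Fin (n-1)) : P n k x (addE x l) =
      if x l = 0 then ((k:ℝ) - n + 1 + numZeros x) / (k * numZeros x) else 1/k := by
  unfold P
  rw [if_neg h0, if_neg hB]
  by_cases hl : x l = 0
  · rw [if_pos ⟨l, hl, rfl⟩, if_pos hl]
  · rw [if_neg, if_pos ⟨l, by omega, rfl⟩, if_neg hl]
    rintro ⟨l', hl', he⟩
    exact hl (addE_inj x he ▸ hl')


lemma row_summable (x : Fin (n-1) → ℕ) (g : (Fin (n-1) → ℕ) → ℝ) :
    Summable (fun y => P n k x y * g y) := by
  apply summable_of_ne_finset_zero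
    (s := insert (subOne x) (Finset.image (addE x) Finset.univ))
  intro y hy
  by_contra hne
  have hP : P n k x y ≠ 0 := fun h => hne (by rw [h]; ring)
  rcases P_support x y hP with h | ⟨l, h⟩
  · exact hy (h ▸ Finset.mem_insert_self _ _)
  · exact hy (Finset.mem_insert_of_mem (Finset.mem_image.mpr ⟨l, Finset.mem_univ l, h.symm⟩))

lemma row (hn : 3 ≤ n) (hk : n ≤ k) (x : Fin (n-1) → ℕ) :
    (∑' y, P n k x y * (∑ i, (y i : ℝ))) =
      (∑ i, (x i : ℝ)) + 1 -
        ((n:ℝ) * ((k:ℝ) - n + 1) / k) * (if numZeros x = 0 then 1 else 0) := by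
  have hk3 : (3:ℝ) ≤ (k:ℝ) := by exact_mod_cast le_trans hn hk
  have hnk : (n:ℝ) ≤ (k:ℝ) := by exact_mod_cast hk
  have hn3 : (3:ℝ) ≤ (n:ℝ) := by exact_mod_cast hn
  have hk0 : (k:ℝ) ≠ 0 := by linarith
  have hm : ((n-1:ℕ):ℝ) = (n:ℝ) - 1 := by
    push_cast [Nat.cast_sub (by omega : 1 ≤ n)]; ring
  by_cases h0 : numZeros x = 0
  · have hx := (numZeros_eq_zero_iff x).mp h0
    rw [if_pos h0]
    rw [tsum_eq_sum (s := insert (subOne x) (Finset.image (addE x) Finset.univ))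
      (by
        intro y hy
        by_contra hne
        have hP : P n k x y ≠ 0 := fun h => hne (by rw [h]; ring)
        rcases P_support x y hP with h | ⟨l, h⟩
        · exact hy (h ▸ Finset.mem_insert_self _ _)
        · exact hy (Finset.mem_insert_of_mem
            (Finset.mem_image.mpr ⟨l, Finset.mem_univ l, h.symm⟩)))]
    rw [Finset.sum_insert (fun hmem => by
      obtain ⟨l, _, hl⟩ := Finset.mem_image.mp hmem
      exact subOne_ne_addE x hx hn l hl.symm)]
    rw [Finset.sum_image (fun a _ b _ h => addE_inj x h)]
    rw [P_subOne_eq x h0, fsum_subOne x hx hn]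
    simp only [P_addE_R0 hn x h0, fsum_addE]
    rw [Finset.sum_const, Finset.card_univ, Fintype.card_fin, nsmul_eq_mul, hm]
    field_simp
    ring
  · rw [if_neg h0]
    rw [tsum_eq_sum (s := Finset.image (addE x) Finset.univ)
      (by
        intro y hy
        by_contra hne
        have hP : P n k x y ≠ 0 := fun h => hne (by rw [h]; ring)
        obtain ⟨l, h⟩ := P_support' x y h0 hP
        exact hy (Finset.mem_image.mpr ⟨l, Finset.mem_univ l, h.symm⟩))]
    rw [Finset.sum_image (fun a _ b _ h => addE_inj x h)]
    simp only [fsum_addE]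
    by_cases hB : numZeros x = n - 1
    · simp only [P_addE_max x h0 hB]
      rw [Finset.sum_const, Finset.card_univ, Fintype.card_fin, nsmul_eq_mul, hm]
      have hne1 : (n:ℝ) - 1 ≠ 0 := by linarith
      field_simp
      ring
    · have hj1 : 1 ≤ numZeros x := Nat.one_le_iff_ne_zero.mpr h0
      have hjle := numZeros_le (n := n) x
      have hj : (1:ℝ) ≤ (numZeros x : ℝ) := by exact_mod_cast hj1
      simp only [P_addE_mid x h0 hB, ite_mul]
      rw [Finset.sum_ite, Finset.sum_const, Finset.sum_const]
      have hc1 : (Finset.filter (fun l => x l = 0) Finset.univ).card = numZeros x := by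
        unfold numZeros; congr 1
      have hc2 : (Finset.filter (fun l => ¬ x l = 0) Finset.univ).card
          = (n-1) - numZeros x := by
        rw [Finset.filter_not, Finset.card_sdiff_of_subset (Finset.filter_subset _ _),
          Finset.card_univ, Fintype.card_fin, hc1]
      rw [hc1, hc2, nsmul_eq_mul, nsmul_eq_mul]
      have hmj : ((n-1-numZeros x:ℕ):ℝ) = (n:ℝ) - 1 - (numZeros x:ℝ) := by
        push_cast [Nat.cast_sub hjle, Nat.cast_sub (by omega : 1 ≤ n)]; ring
      rw [hmj]
      have hjne : (numZeros x : ℝ) ≠ 0 := by linarith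
      field_simp
      ring

end Aux

/-- value of `∑_{x ∈ R₀} π(x)` and of the capacity. -/
theorem stmt_0 (n k : ℕ) (hn : 3 ≤ n) (hk : n ≤ k)
    (π : (Fin (n-1) → ℕ) → ℝ) (hπ : IsStationaryP n k π)
    (hmom : Summable (fun x : Fin (n-1) → ℕ => π x * ∑ i, (x i : ℝ)))
    (q μ : ℝ) (hq0 : 0 < q) (hq1 : q ≤ 1) (hμ : 0 < μ) :
    (∑' x : {x : Fin (n-1) → ℕ // numZeros x = 0}, π x.1)
      = (k : ℝ) / (n * ((k:ℝ) - n + 1)) ∧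
    q * μ * ((k:ℝ) - ((n:ℝ) - 1)) *
        (∑' x : {x : Fin (n-1) → ℕ // numZeros x = 0}, π x.1)
      = q * μ * k / n := by
  classical
  obtain ⟨hpos, hsum, h1, hstat⟩ := hπ
  have hk3 : (3:ℝ) ≤ (k:ℝ) := by exact_mod_cast le_trans hn hk
  have hnk : (n:ℝ) ≤ (k:ℝ) := by exact_mod_cast hk
  have hn3 : (3:ℝ) ≤ (n:ℝ) := by exact_mod_cast hn
  have hk0 : (k:ℝ) ≠ 0 := by linarith
  have hkn1 : (0:ℝ) < (k:ℝ) - n + 1 := by linarith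
  set c : ℝ := (n:ℝ) * ((k:ℝ) - n + 1) / k with hc
  have hcpos : 0 < c := by
    rw [hc]; positivity
  set S : Set (Fin (n-1) → ℕ) := {x | numZeros x = 0} with hS
  have hind : ∀ x, c * Set.indicator S π x
      = π x * (c * (if numZeros x = 0 then 1 else 0)) := by
    intro x
    by_cases hx : numZeros x = 0
    · rw [Set.indicator_of_mem (by exact hx) π, if_pos hx]; ring
    · rw [Set.indicator_of_notMem (by exact hx) π, if_neg hx]; ring
  have hindsum : Summable (S.indicator π) := hsum.indicator S
  -- summability of the drift-adjusted sum
  have hA : Summable (fun x => π x * (∑ i, (x i : ℝ)) + π x) := hmom.add hsum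
  have hB : Summable (fun x => c * S.indicator π x) := hindsum.mul_left c
  have key : ∀ x : Fin (n-1) → ℕ,
      π x * ((∑ i, (x i : ℝ)) + 1 - c * (if numZeros x = 0 then 1 else 0))
        = (π x * (∑ i, (x i : ℝ)) + π x) - c * S.indicator π x := by
    intro x
    rw [hind]
    ring
  -- the double sum function
  set g : (Fin (n-1) → ℕ) → (Fin (n-1) → ℕ) → ℝ :=
    fun x y => π x * (P n k x y * (∑ i, (y i : ℝ))) with hg
  have hgrow : ∀ x, (∑' y, g x y)
      = π x * ((∑ i, (x i : ℝ)) + 1 - c * (if numZeros x = 0 then 1 else 0)) := by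
    intro x
    rw [hg]
    rw [tsum_mul_left, Aux.row hn hk x, hc]
  have hnn : ∀ p : (Fin (n-1) → ℕ) × (Fin (n-1) → ℕ), 0 ≤ Function.uncurry g p := by
    intro p
    exact mul_nonneg (hpos _) (mul_nonneg (Aux.P_nonneg hn hk _ _)
      (Finset.sum_nonneg fun i _ => Nat.cast_nonneg _))
  have hunc : Summable (Function.uncurry g) := by
    rw [summable_prod_of_nonneg hnn]
    refine ⟨fun x => (Aux.row_summable x _).mul_left (π x), ?_⟩
    apply Summable.congr (hA.sub hB)
    intro x
    rw [show (∑' y, Function.uncurry g (x, y)) = ∑' y, g x y from rfl, hgrow x, key x]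
  have hmomval : (∑' x, π x * (∑ i, (x i : ℝ)))
      = ∑' x, ((π x * (∑ i, (x i : ℝ)) + π x) - c * S.indicator π x) := by
    calc (∑' y, π y * (∑ i, (y i : ℝ)))
        = ∑' y, (∑' x, π x * P n k x y) * (∑ i, (y i : ℝ)) :=
          tsum_congr (fun y => by rw [(hstat y).2])
      _ = ∑' y, ∑' x, g x y := by
          refine tsum_congr (fun y => ?_)
          rw [← tsum_mul_right]
          exact tsum_congr fun x => by rw [hg]; ring
      _ = ∑' x, ∑' y, g x y := Summable.tsum_comm hunc
      _ = ∑' x, ((π x * (∑ i, (x i : ℝ)) + π x) - c * S.indicator π x) :=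
          tsum_congr (fun x => by rw [hgrow x, key x])
  have hsplit : (∑' x, ((π x * (∑ i, (x i : ℝ)) + π x) - c * S.indicator π x))
      = ((∑' x, π x * (∑ i, (x i : ℝ))) + (∑' x, π x)) - c * ∑' x, S.indicator π x := by
    rw [Summable.tsum_sub hA hB, Summable.tsum_add hmom hsum, tsum_mul_left]
  have hcT : c * (∑' x, S.indicator π x) = 1 := by
    rw [hsplit] at hmomval
    rw [h1] at hmomval
    linarith
  have hsub : (∑' x : {x : Fin (n-1) → ℕ // numZeros x = 0}, π x.1)
      = ∑' x, S.indicator π x := tsum_subtype S π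
  have hT : (∑' x : {x : Fin (n-1) → ℕ // numZeros x = 0}, π x.1)
      = (k : ℝ) / (n * ((k:ℝ) - n + 1)) := by
    rw [hsub]
    rw [hc] at hcT
    have hn0 : (n:ℝ) ≠ 0 := by linarith
    have hd0 : (n:ℝ) * ((k:ℝ) - n + 1) ≠ 0 := by positivity
    field_simp at hcT ⊢
    linarith
  refine ⟨hT, ?_⟩
  rw [hT]
  have hn0 : (n:ℝ) ≠ 0 := by linarith
  have hd0 : ((k:ℝ) - (n:ℝ) + 1) ≠ 0 := ne_of_gt hkn1
  field_simp
  ring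
end
end

section
/- Suppose k > n and π is a stationary distribution of the transition matrix P with finite first moment, i.e. ∑_{x∈ℕ^{n−1}} π(x)|x| < ∞. Then the expected number of stored qubits in steady state satisfies ∑_{x∈ℕ^{n−1}} π(x)|x| = k(n−1)/(2(k−n)). Moreover, A := ∑_{x∈R_0} π(x)|x| = k(n−1)(2k−n)/(2n(k−n)(k−(n−1))) and B := ∑_{j=1}^{n−2} ∑_{x∈R_j} π(x)|x| = k(n−1)(n−2)/(2n(k−(n−1))). -/
open scoped Classical BigOperators

noncomputable section

/-- `π` is a stationary distribution of `P`. -/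
def IsStationaryChain (n k : ℕ) (π : (Fin (n-1) → ℕ) → ℝ) : Prop :=
  (∀ x, 0 ≤ π x) ∧ Summable π ∧ (∑' x, π x) = 1 ∧
  ∀ y, Summable (fun x => π x * P n k x y) ∧ (∑' x, π x * P n k x y) = π y

namespace QBaux

variable {n k : ℕ}

abbrev St (n : ℕ) := Fin (n-1) → ℕ

/-- total number of stored qubits -/
def SV {n : ℕ} (x : St n) : ℝ := ∑ i, (x i : ℝ)

def SQ {n : ℕ} (x : St n) : ℝ := (SV x)^2

def Q2 {n : ℕ} (x : St n) : ℝ := ∑ i, ((x i : ℝ))^2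

/-- one-step averaging operator (finite form) -/
def Pop (n k : ℕ) (f : St n → ℝ) (x : St n) : ℝ :=
  P n k x (subOne x) * f (subOne x) + ∑ l, P n k x (addE x l) * f (addE x l)

lemma addE_apply (x : St n) (l i : Fin (n-1)) :
    addE x l i = if i = l then x l + 1 else x i := Function.update_apply x l (x l + 1) i

lemma addE_ne_subOne (x : St n) (l : Fin (n-1)) : addE x l ≠ subOne x := by
  intro h
  have h1 := congrFun h l
  rw [addE_apply, if_pos rfl] at h1
  simp only [subOne] at h1
  omega

lemma addE_injL (x : St n) {l m : Fin (n-1)} (h : addE x l = addE x m) : l = m := by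
  by_contra hne
  have h1 := congrFun h l
  rw [addE_apply, addE_apply, if_pos rfl, if_neg hne] at h1
  omega

lemma numZeros_le (x : St n) : numZeros x ≤ n - 1 := by
  have := Finset.card_filter_le (Finset.univ : Finset (Fin (n-1))) (fun i => x i = 0)
  simpa [numZeros] using this

lemma pos_of_numZeros_eq_zero {x : St n} (h : numZeros x = 0) (i : Fin (n-1)) : x i ≠ 0 := by
  rw [numZeros, Finset.card_eq_zero] at h
  intro hx
  have : i ∈ Finset.univ.filter (fun i => x i = 0) := by simp [hx]
  rw [h] at this
  exact absurd this (Finset.notMem_empty i)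

lemma eq_zero_of_numZeros_full {x : St n} (h : numZeros x = n - 1) (i : Fin (n-1)) : x i = 0 := by
  rw [numZeros] at h
  have hu : Finset.univ.filter (fun i => x i = 0) = Finset.univ :=
    Finset.eq_univ_of_card _ (by rw [h, Fintype.card_fin])
  have hi : i ∈ Finset.univ.filter (fun i => x i = 0) := by rw [hu]; exact Finset.mem_univ i
  exact (Finset.mem_filter.mp hi).2

lemma P_nonneg (hn : 3 ≤ n) (hk : n < k) (x y : St n) : 0 ≤ P n k x y := by
  have hk0 : (0:ℝ) < k := by
    have : 0 < k := by omega
    exact_mod_cast this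
  have hnk : (n:ℝ) < k := by exact_mod_cast hk
  have hn3 : (3:ℝ) ≤ n := by exact_mod_cast hn
  have hj : (0:ℝ) ≤ (numZeros x : ℝ) := Nat.cast_nonneg _
  rw [P]
  split_ifs
  all_goals try exact le_refl 0
  · apply div_nonneg (by linarith) hk0.le
  · positivity
  · apply div_nonneg (by norm_num) (by linarith)
  · apply div_nonneg (by linarith) (by positivity)
  · positivity

lemma P_ne_zero_cases {x y : St n} (h : P n k x y ≠ 0) :
    y = subOne x ∨ ∃ l, y = addE x l := by
  by_cases h1 : numZeros x = 0
  · rw [P, if_pos h1] at h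
    by_cases h2 : y = subOne x
    · exact Or.inl h2
    · rw [if_neg h2] at h
      by_cases h3 : ∃ l, y = addE x l
      · exact Or.inr h3
      · rw [if_neg h3] at h; exact absurd rfl h
  · rw [P, if_neg h1] at h
    by_cases h4 : numZeros x = n - 1
    · rw [if_pos h4] at h
      by_cases h5 : ∃ l, y = addE x l
      · exact Or.inr h5
      · rw [if_neg h5] at h; exact absurd rfl h
    · rw [if_neg h4] at h
      by_cases h6 : ∃ l, x l = 0 ∧ y = addE x l
      · exact Or.inr ⟨h6.choose, h6.choose_spec.2⟩
      · rw [if_neg h6] at h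
        by_cases h7 : ∃ l, 1 ≤ x l ∧ y = addE x l
        · exact Or.inr ⟨h7.choose, h7.choose_spec.2⟩
        · rw [if_neg h7] at h; exact absurd rfl h

lemma P_subOne_eq {x : St n} (h0 : numZeros x = 0) :
    P n k x (subOne x) = ((k:ℝ) - n + 1) / k := by
  rw [P, if_pos h0, if_pos rfl]

lemma P_subOne_ne {x : St n} (h0 : numZeros x ≠ 0) : P n k x (subOne x) = 0 := by
  have hno : ∀ l, ¬ (subOne x = addE x l) := fun l hl => addE_ne_subOne x l hl.symm
  rw [P, if_neg h0]
  split_ifs with h1 h2 h3 h4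
  · exact absurd h2.choose_spec (hno _)
  · rfl
  · exact absurd h3.choose_spec.2 (hno _)
  · exact absurd h4.choose_spec.2 (hno _)
  · rfl

lemma P_addE_eq0 {x : St n} (h0 : numZeros x = 0) (l : Fin (n-1)) :
    P n k x (addE x l) = 1 / k := by
  rw [P, if_pos h0, if_neg (addE_ne_subOne x l), if_pos ⟨l, rfl⟩]

lemma P_addE_full (hn : 3 ≤ n) {x : St n} (h0 : numZeros x = n - 1) (l : Fin (n-1)) :
    P n k x (addE x l) = 1 / ((n:ℝ) - 1) := by
  have h1 : numZeros x ≠ 0 := by omega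
  rw [P, if_neg h1, if_pos h0, if_pos ⟨l, rfl⟩]

lemma P_addE_mid {x : St n} (h1 : numZeros x ≠ 0) (h2 : numZeros x ≠ n - 1) (l : Fin (n-1)) :
    P n k x (addE x l) =
      if x l = 0 then ((k:ℝ) - n + 1 + numZeros x) / (k * numZeros x) else 1 / k := by
  rw [P, if_neg h1, if_neg h2]
  by_cases hxl : x l = 0
  · rw [if_pos hxl, if_pos ⟨l, hxl, rfl⟩]
  · rw [if_neg hxl]
    have hno : ¬ ∃ m, x m = 0 ∧ addE x l = addE x m := by
      rintro ⟨m, hm, he⟩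
      cases addE_injL x he
      exact hxl hm
    rw [if_neg hno, if_pos ⟨l, Nat.one_le_iff_ne_zero.2 hxl, rfl⟩]

lemma cast_nsub1 (hn : 3 ≤ n) : ((n-1 : ℕ) : ℝ) = (n:ℝ) - 1 := by
  have h1 : 1 ≤ n := by omega
  push_cast [h1]
  ring

lemma sum_ite_zeros (x : St n) (a b : ℝ) :
    (∑ l, if x l = 0 then a else b)
      = (numZeros x : ℝ) * a + (((n-1:ℕ):ℝ) - numZeros x) * b := by
  rw [Finset.sum_ite]
  have hcc := Finset.card_filter_add_card_filter_not
    (s := (Finset.univ : Finset (Fin (n-1)))) (p := fun l => x l = 0)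
  have hcu : (Finset.univ : Finset (Fin (n-1))).card = n - 1 := by simp
  have hz : (Finset.univ.filter (fun l => x l = 0)).card = numZeros x := rfl
  have hnz : (Finset.univ.filter (fun l => ¬ x l = 0)).card = (n-1) - numZeros x := by omega
  rw [Finset.sum_const, Finset.sum_const, hz, hnz, nsmul_eq_mul, nsmul_eq_mul]
  have : (((n-1) - numZeros x : ℕ) : ℝ) = ((n-1:ℕ):ℝ) - numZeros x := by
    have := numZeros_le x
    push_cast [this]
    ring
  rw [this]

lemma row_one (hn : 3 ≤ n) (hk : n < k) (x : St n) :
    P n k x (subOne x) + ∑ l, P n k x (addE x l) = 1 := by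
  have hk0 : (k:ℝ) ≠ 0 := by
    have : 0 < k := by omega
    positivity
  have hd : ((n-1:ℕ):ℝ) = (n:ℝ) - 1 := cast_nsub1 hn
  have hn1 : (n:ℝ) - 1 ≠ 0 := by
    have : (3:ℝ) ≤ n := by exact_mod_cast hn
    intro h; linarith
  rcases eq_or_ne (numZeros x) 0 with h0 | h0
  · rw [P_subOne_eq h0, Finset.sum_congr rfl (fun l _ => P_addE_eq0 h0 l),
      Finset.sum_const, Finset.card_univ, Fintype.card_fin, nsmul_eq_mul, hd]
    field_simp
    ring
  rcases eq_or_ne (numZeros x) (n-1) with hf | hf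
  · rw [P_subOne_ne h0, Finset.sum_congr rfl (fun l _ => P_addE_full hn hf l),
      Finset.sum_const, Finset.card_univ, Fintype.card_fin, nsmul_eq_mul, hd]
    field_simp
    ring
  · rw [P_subOne_ne h0, Finset.sum_congr rfl (fun l _ => P_addE_mid h0 hf l),
      sum_ite_zeros x _ _, hd]
    have hj0 : (numZeros x : ℝ) ≠ 0 := by
      intro h
      exact h0 (by exact_mod_cast h)
    field_simp
    ring

lemma SV_nonneg (x : St n) : 0 ≤ SV x :=
  Finset.sum_nonneg fun i _ => Nat.cast_nonneg _

lemma SQ_nonneg (x : St n) : 0 ≤ SQ x := sq_nonneg _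

lemma Q2_nonneg (x : St n) : 0 ≤ Q2 x :=
  Finset.sum_nonneg fun i _ => sq_nonneg _

lemma SV_addE (x : St n) (l : Fin (n-1)) : SV (addE x l) = SV x + 1 := by
  rw [SV, SV, Finset.sum_congr rfl
    (fun i _ => show ((addE x l i : ℕ):ℝ) = (x i : ℝ) + if i = l then 1 else 0 by
      rw [addE_apply]
      rcases eq_or_ne i l with rfl | h
      · rw [if_pos rfl, if_pos rfl]; push_cast; ring
      · rw [if_neg h, if_neg h, add_zero]),
    Finset.sum_add_distrib]
  simp

lemma Q2_addE (x : St n) (l : Fin (n-1)) : Q2 (addE x l) = Q2 x + 2 * (x l : ℝ) + 1 := by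
  rw [Q2, Q2, Finset.sum_congr rfl
    (fun i _ => show ((addE x l i : ℕ):ℝ)^2 = ((x i : ℝ))^2 + (if i = l then 2*(x l:ℝ) + 1 else 0) by
      rw [addE_apply]
      rcases eq_or_ne i l with rfl | h
      · rw [if_pos rfl, if_pos rfl]; push_cast; ring
      · rw [if_neg h, if_neg h, add_zero]),
    Finset.sum_add_distrib]
  rw [Finset.sum_ite_eq' Finset.univ l (fun _ => 2*(x l:ℝ)+1)]
  simp [add_assoc]

lemma SV_subOne {x : St n} (h0 : numZeros x = 0) :
    SV (subOne x) = SV x - ((n-1:ℕ):ℝ) := by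
  rw [SV, SV, Finset.sum_congr rfl
    (fun i _ => show ((subOne x i : ℕ):ℝ) = (x i : ℝ) - 1 by
      have hx := pos_of_numZeros_eq_zero h0 i
      show (((x i - 1 : ℕ)):ℝ) = (x i:ℝ) - 1
      have h1 : 1 ≤ x i := by omega
      push_cast [h1]; ring),
    Finset.sum_sub_distrib]
  simp

lemma Q2_subOne {x : St n} (h0 : numZeros x = 0) :
    Q2 (subOne x) = Q2 x - 2 * SV x + ((n-1:ℕ):ℝ) := by
  rw [Q2, Q2, SV, Finset.sum_congr rfl
    (fun i _ => show ((subOne x i : ℕ):ℝ)^2 = ((x i : ℝ))^2 - 2*(x i:ℝ) + 1 by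
      have hx := pos_of_numZeros_eq_zero h0 i
      show (((x i - 1 : ℕ)):ℝ)^2 = ((x i:ℝ))^2 - 2*(x i:ℝ) + 1
      have h1 : 1 ≤ x i := by omega
      push_cast [h1]; ring)]
  rw [Finset.sum_add_distrib, Finset.sum_sub_distrib, ← Finset.mul_sum]
  simp

lemma SV_full {x : St n} (hf : numZeros x = n - 1) : SV x = 0 := by
  rw [SV]
  apply Finset.sum_eq_zero
  intro i _
  rw [eq_zero_of_numZeros_full hf i]
  norm_num

/-- sum over nonzero rows: `P x (addE x l) * x l = (1/k) * x l`. -/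
lemma coef_xl (hn : 3 ≤ n) (hk : n < k) {x : St n} (h0 : numZeros x ≠ 0) (l : Fin (n-1)) :
    P n k x (addE x l) * (x l : ℝ) = (1/(k:ℝ)) * (x l : ℝ) := by
  rcases eq_or_ne (numZeros x) (n-1) with hf | hf
  · rw [eq_zero_of_numZeros_full hf l]
    norm_num
  · rw [P_addE_mid h0 hf l]
    by_cases hxl : x l = 0
    · rw [hxl]; norm_num
    · rw [if_neg hxl]

lemma sum_coef_one (hn : 3 ≤ n) (hk : n < k) {x : St n} (h0 : numZeros x ≠ 0) :
    ∑ l, P n k x (addE x l) = 1 := by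
  have h := row_one hn hk x
  rw [P_subOne_ne h0, zero_add] at h
  exact h

lemma drift_SV (hn : 3 ≤ n) (hk : n < k) (x : St n) :
    Pop n k SV x = SV x +
      (if numZeros x = 0 then -(((n:ℝ)-1)*((k:ℝ)-n)/k) else 1) := by
  have hk0 : (k:ℝ) ≠ 0 := by
    have : 0 < k := by omega
    positivity
  have hd : ((n-1:ℕ):ℝ) = (n:ℝ) - 1 := cast_nsub1 hn
  rcases eq_or_ne (numZeros x) 0 with h0 | h0
  · rw [Pop, if_pos h0, P_subOne_eq h0, SV_subOne h0,
      Finset.sum_congr rfl (fun l _ => by rw [P_addE_eq0 h0 l, SV_addE]),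
      Finset.sum_const, Finset.card_univ, Fintype.card_fin, nsmul_eq_mul, hd]
    field_simp
    ring
  · rw [Pop, if_neg h0, P_subOne_ne h0, zero_mul, zero_add,
      Finset.sum_congr rfl (fun l _ => by rw [SV_addE]), ← Finset.sum_mul,
      sum_coef_one hn hk h0, one_mul]

lemma drift_SQ (hn : 3 ≤ n) (hk : n < k) (x : St n) :
    Pop n k SQ x = SQ x +
      (if numZeros x = 0 then
        -(2*((n:ℝ)-1)*((k:ℝ)-n)/k) * SV x + (((n:ℝ)-1)^2*((k:ℝ)-n+1) + ((n:ℝ)-1))/k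
      else 2 * SV x + 1) := by
  have hk0 : (k:ℝ) ≠ 0 := by
    have : 0 < k := by omega
    positivity
  have hd : ((n-1:ℕ):ℝ) = (n:ℝ) - 1 := cast_nsub1 hn
  rcases eq_or_ne (numZeros x) 0 with h0 | h0
  · rw [Pop, if_pos h0, P_subOne_eq h0,
      Finset.sum_congr rfl (fun l _ => by rw [P_addE_eq0 h0 l, SQ, SV_addE]),
      Finset.sum_const, Finset.card_univ, Fintype.card_fin, nsmul_eq_mul, hd,
      SQ, SV_subOne h0, hd, SQ]
    field_simp
    ring
  · rw [Pop, if_neg h0, P_subOne_ne h0, zero_mul, zero_add,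
      Finset.sum_congr rfl (fun l _ => by rw [SQ, SV_addE]), ← Finset.sum_mul,
      sum_coef_one hn hk h0, one_mul, SQ]
    ring

lemma drift_Q2 (hn : 3 ≤ n) (hk : n < k) (x : St n) :
    Pop n k Q2 x = Q2 x +
      (if numZeros x = 0 then
        -(2*((k:ℝ)-n)/k) * SV x + ((n:ℝ)-1)*((k:ℝ)-n+2)/k
      else 2 * SV x / k + 1) := by
  have hk0 : (k:ℝ) ≠ 0 := by
    have : 0 < k := by omega
    positivity
  have hd : ((n-1:ℕ):ℝ) = (n:ℝ) - 1 := cast_nsub1 hn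
  have hSV : (∑ l, (x l : ℝ)) = SV x := rfl
  rcases eq_or_ne (numZeros x) 0 with h0 | h0
  · have hsum : (∑ l, (1/(k:ℝ)) * (Q2 x + 2*(x l:ℝ) + 1))
        = ((n:ℝ)-1) * ((1/(k:ℝ)) * (Q2 x + 1)) + (2/(k:ℝ)) * SV x := by
      rw [Finset.sum_congr rfl (fun l _ =>
          show (1/(k:ℝ))*(Q2 x + 2*(x l:ℝ)+1)
              = (1/(k:ℝ))*(Q2 x + 1) + (2/(k:ℝ))*(x l:ℝ) from by ring),
        Finset.sum_add_distrib, Finset.sum_const, Finset.card_univ, Fintype.card_fin,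
        nsmul_eq_mul, hd, ← Finset.mul_sum, hSV]
    rw [Pop, if_pos h0, P_subOne_eq h0, Q2_subOne h0, hd,
      Finset.sum_congr rfl (fun l _ => by rw [P_addE_eq0 h0 l, Q2_addE]), hsum]
    field_simp
    ring
  · have hterm : ∀ l, P n k x (addE x l) * (Q2 x + 2*(x l:ℝ) + 1)
        = P n k x (addE x l) * (Q2 x + 1) + ((1/(k:ℝ)) * (x l:ℝ)) * 2 := by
      intro l
      rw [show P n k x (addE x l) * (Q2 x + 2*(x l:ℝ)+1)
          = P n k x (addE x l) * (Q2 x + 1) + (P n k x (addE x l) * (x l:ℝ)) * 2 from by ring,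
        coef_xl hn hk h0 l]
    have hsum2 : (∑ l, P n k x (addE x l) * (Q2 x + 2*(x l:ℝ) + 1))
        = (∑ l, P n k x (addE x l)) * (Q2 x + 1) + (2/(k:ℝ)) * SV x := by
      rw [Finset.sum_congr rfl (fun l _ => hterm l), Finset.sum_add_distrib,
        ← Finset.sum_mul, ← Finset.sum_mul, ← Finset.mul_sum, hSV]
      ring
    rw [Pop, if_neg h0, P_subOne_ne h0, zero_mul, zero_add,
      Finset.sum_congr rfl (fun l _ => by rw [Q2_addE]), hsum2,
      sum_coef_one hn hk h0, one_mul]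
    ring

lemma Pop_nonneg (hn : 3 ≤ n) (hk : n < k) {f : St n → ℝ} (hf : ∀ y, 0 ≤ f y) (x : St n) :
    0 ≤ Pop n k f x :=
  add_nonneg (mul_nonneg (P_nonneg hn hk _ _) (hf _))
    (Finset.sum_nonneg fun l _ => mul_nonneg (P_nonneg hn hk _ _) (hf _))

lemma min_lip (a b c : ℝ) : |min a c - min b c| ≤ |a - b| := by
  refine le_trans (abs_min_sub_min_le_max a c b c) ?_
  rw [sub_self, abs_zero]
  exact max_le le_rfl (abs_nonneg _)

/-- If `g` moves by at most `B` on reachable states, `Pop g` moves by at most `B`. -/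
lemma pop_abs_bound (hn : 3 ≤ n) (hk : n < k) (x : St n) (g : St n → ℝ) (B : ℝ)
    (hB1 : |g (subOne x) - g x| ≤ B) (hB2 : ∀ l, |g (addE x l) - g x| ≤ B) (hB0 : 0 ≤ B) :
    |Pop n k g x - g x| ≤ B := by
  have hrow := row_one hn hk x
  have hdecomp : Pop n k g x - g x
      = P n k x (subOne x) * (g (subOne x) - g x)
        + ∑ l, P n k x (addE x l) * (g (addE x l) - g x) := by
    rw [Finset.sum_congr rfl (fun l _ =>
        show P n k x (addE x l) * (g (addE x l) - g x)
          = P n k x (addE x l) * g (addE x l) - P n k x (addE x l) * g x from by ring),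
      Finset.sum_sub_distrib, ← Finset.sum_mul, Pop]
    linear_combination (g x) * hrow
  rw [hdecomp]
  refine le_trans (abs_add_le _ _) ?_
  have h1 : |P n k x (subOne x) * (g (subOne x) - g x)| ≤ P n k x (subOne x) * B := by
    rw [abs_mul, abs_of_nonneg (P_nonneg hn hk _ _)]
    exact mul_le_mul_of_nonneg_left hB1 (P_nonneg hn hk _ _)
  have h2 : |∑ l, P n k x (addE x l) * (g (addE x l) - g x)|
      ≤ ∑ l, P n k x (addE x l) * B := by
    refine le_trans (Finset.abs_sum_le_sum_abs _ _) (Finset.sum_le_sum fun l _ => ?_)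
    rw [abs_mul, abs_of_nonneg (P_nonneg hn hk _ _)]
    exact mul_le_mul_of_nonneg_left (hB2 l) (P_nonneg hn hk _ _)
  refine le_trans (add_le_add h1 h2) ?_
  rw [← Finset.sum_mul, ← add_mul, hrow, one_mul]

lemma rowsum_ofReal (hn : 3 ≤ n) (hk : n < k) (f : St n → ℝ) (hf : ∀ y, 0 ≤ f y) (x : St n) :
    ∑' y, ENNReal.ofReal (P n k x y * f y) = ENNReal.ofReal (Pop n k f x) := by
  classical
  set S : Finset (St n) := insert (subOne x) (Finset.image (addE x) Finset.univ) with hS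
  have hout : ∀ y ∉ S, ENNReal.ofReal (P n k x y * f y) = 0 := by
    intro y hy
    have hz : P n k x y = 0 := by
      by_contra hne
      rcases P_ne_zero_cases hne with h | ⟨l, hl⟩
      · exact hy (by rw [hS, h]; exact Finset.mem_insert_self _ _)
      · refine hy ?_
        rw [hS]
        refine Finset.mem_insert_of_mem ?_
        exact Finset.mem_image.2 ⟨l, Finset.mem_univ l, hl.symm⟩
    rw [hz, zero_mul, ENNReal.ofReal_zero]
  rw [tsum_eq_sum hout]
  have hsub : subOne x ∉ Finset.image (addE x) Finset.univ := by
    rw [Finset.mem_image]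
    rintro ⟨l, -, hl⟩
    exact addE_ne_subOne x l hl
  rw [hS, Finset.sum_insert hsub,
    Finset.sum_image (fun l _ m _ h => addE_injL x h),
    ← ENNReal.ofReal_sum_of_nonneg (fun l _ => mul_nonneg (P_nonneg hn hk _ _) (hf _)),
    ← ENNReal.ofReal_add (mul_nonneg (P_nonneg hn hk _ _) (hf _))
      (Finset.sum_nonneg fun l _ => mul_nonneg (P_nonneg hn hk _ _) (hf _))]
  rfl

lemma master (hn : 3 ≤ n) (hk : n < k) {π : St n → ℝ} (hπ : IsStationaryChain n k π)
    (f : St n → ℝ) (hf : ∀ y, 0 ≤ f y) (hsum : Summable fun x => π x * f x) :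
    Summable (fun x => π x * Pop n k f x)
      ∧ (∑' x, π x * Pop n k f x) = ∑' x, π x * f x := by
  obtain ⟨hpos, hsumπ, htot, hst⟩ := hπ
  have hPn : ∀ x, 0 ≤ Pop n k f x := Pop_nonneg hn hk hf
  have key : (∑' y, ENNReal.ofReal (π y * f y)) = ∑' x, ENNReal.ofReal (π x * Pop n k f x) := by
    have step1 : ∀ y, ENNReal.ofReal (π y * f y)
        = ∑' x, ENNReal.ofReal (π x * P n k x y * f y) := by
      intro y
      rw [← (hst y).2, ← tsum_mul_right]
      exact ENNReal.ofReal_tsum_of_nonneg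
        (fun x => mul_nonneg (mul_nonneg (hpos x) (P_nonneg hn hk x y)) (hf y))
        ((hst y).1.mul_right _)
    calc (∑' y, ENNReal.ofReal (π y * f y))
        = ∑' y, ∑' x, ENNReal.ofReal (π x * P n k x y * f y) := tsum_congr step1
      _ = ∑' x, ∑' y, ENNReal.ofReal (π x * P n k x y * f y) := ENNReal.tsum_comm
      _ = ∑' x, ∑' y, ENNReal.ofReal (π x) * ENNReal.ofReal (P n k x y * f y) := by
          refine tsum_congr fun x => tsum_congr fun y => ?_
          rw [← ENNReal.ofReal_mul (hpos x), mul_assoc]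
      _ = ∑' x, ENNReal.ofReal (π x) * ∑' y, ENNReal.ofReal (P n k x y * f y) := by
          exact tsum_congr fun x => ENNReal.tsum_mul_left
      _ = ∑' x, ENNReal.ofReal (π x * Pop n k f x) := by
          refine tsum_congr fun x => ?_
          rw [rowsum_ofReal hn hk f hf x, ← ENNReal.ofReal_mul (hpos x)]
  have hfin : (∑' y, ENNReal.ofReal (π y * f y)) ≠ ⊤ := by
    rw [← ENNReal.ofReal_tsum_of_nonneg (fun x => mul_nonneg (hpos x) (hf x)) hsum]
    exact ENNReal.ofReal_ne_top
  have hsum2 : Summable (fun x => π x * Pop n k f x) := by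
    have h := ENNReal.summable_toReal (key ▸ hfin)
    exact h.congr fun x => ENNReal.toReal_ofReal (mul_nonneg (hpos x) (hPn x))
  refine ⟨hsum2, ?_⟩
  have h1 : ENNReal.ofReal (∑' x, π x * Pop n k f x) = ENNReal.ofReal (∑' x, π x * f x) := by
    rw [ENNReal.ofReal_tsum_of_nonneg (fun x => mul_nonneg (hpos x) (hPn x)) hsum2,
      ENNReal.ofReal_tsum_of_nonneg (fun x => mul_nonneg (hpos x) (hf x)) hsum, key]
  exact (ENNReal.ofReal_eq_ofReal_iff
    (tsum_nonneg fun x => mul_nonneg (hpos x) (hPn x))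
    (tsum_nonneg fun x => mul_nonneg (hpos x) (hf x))).1 h1

lemma balance (hn : 3 ≤ n) (hk : n < k) {π : St n → ℝ} (hπ : IsStationaryChain n k π)
    (f : St n → ℝ) (hf : ∀ y, 0 ≤ f y) (hsum : Summable fun x => π x * f x) :
    ∑' x, π x * (Pop n k f x - f x) = 0 := by
  obtain ⟨hs2, he⟩ := master hn hk hπ f hf hsum
  have hfun : (fun x => π x * (Pop n k f x - f x))
      = fun x => π x * Pop n k f x - π x * f x := by
    funext x; ring
  rw [hfun, Summable.tsum_sub hs2 hsum, he, sub_self]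

open Filter Topology in
lemma trunc_balance (hn : 3 ≤ n) (hk : n < k) {π : St n → ℝ} (hπ : IsStationaryChain n k π)
    (hmom : Summable fun x => π x * SV x)
    (h : St n → ℝ) (hh0 : ∀ x, 0 ≤ h x)
    (hd1 : ∀ x, |h (subOne x) - h x| ≤ 3*(n:ℝ)^2 * (SV x + 1))
    (hd2 : ∀ x l, |h (addE x l) - h x| ≤ 3*(n:ℝ)^2 * (SV x + 1)) :
    ∑' x, π x * (Pop n k h x - h x) = 0 := by
  have hpos := hπ.1
  have hsumπ := hπ.2.1
  have hB0 : ∀ x : St n, 0 ≤ 3*(n:ℝ)^2 * (SV x + 1) := fun x => by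
    have := SV_nonneg x
    positivity
  have hfM0 : ∀ (M : ℕ) (y : St n), 0 ≤ min (h y) (M:ℝ) :=
    fun M y => le_min (hh0 y) (Nat.cast_nonneg M)
  have hsumfM : ∀ M : ℕ, Summable (fun x => π x * min (h x) (M:ℝ)) := fun M =>
    Summable.of_nonneg_of_le (fun x => mul_nonneg (hpos x) (hfM0 M x))
      (fun x => mul_le_mul_of_nonneg_left (min_le_right _ _) (hpos x))
      (hsumπ.mul_right (M:ℝ))
  have hzero : ∀ M : ℕ,
      ∑' x, π x * (Pop n k (fun y => min (h y) (M:ℝ)) x - min (h x) (M:ℝ)) = 0 :=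
    fun M => balance hn hk hπ _ (hfM0 M) (hsumfM M)
  have hbound_sum : Summable (fun x => π x * (3*(n:ℝ)^2 * (SV x + 1))) := by
    have heq : (fun x => π x * (3*(n:ℝ)^2 * (SV x + 1)))
        = fun x => 3*(n:ℝ)^2 * (π x * SV x) + 3*(n:ℝ)^2 * π x := by
      funext x; ring
    rw [heq]
    exact (hmom.mul_left _).add (hsumπ.mul_left _)
  have hdom : ∀ (M : ℕ) (x : St n),
      ‖π x * (Pop n k (fun y => min (h y) (M:ℝ)) x - min (h x) (M:ℝ))‖
        ≤ π x * (3*(n:ℝ)^2 * (SV x + 1)) := by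
    intro M x
    rw [Real.norm_eq_abs, abs_mul, abs_of_nonneg (hpos x)]
    refine mul_le_mul_of_nonneg_left ?_ (hpos x)
    exact pop_abs_bound hn hk x _ _
      (le_trans (min_lip _ _ _) (hd1 x))
      (fun l => le_trans (min_lip _ _ _) (hd2 x l)) (hB0 x)
  have hpt : ∀ x : St n, Tendsto
      (fun M : ℕ => π x * (Pop n k (fun y => min (h y) (M:ℝ)) x - min (h x) (M:ℝ)))
      atTop (𝓝 (π x * (Pop n k h x - h x))) := by
    intro x
    refine Tendsto.congr' ?_ tendsto_const_nhds
    rw [Filter.EventuallyEq, Filter.eventually_atTop]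
    refine ⟨⌈h x⌉₊ + ⌈h (subOne x)⌉₊ + ∑ l, ⌈h (addE x l)⌉₊, fun M hM => ?_⟩
    have hc1 : ⌈h x⌉₊ ≤ M := le_trans (by omega) hM
    have hc2 : ⌈h (subOne x)⌉₊ ≤ M := le_trans (by omega) hM
    have hc3 : ∀ l, ⌈h (addE x l)⌉₊ ≤ M := fun l =>
      le_trans (le_trans (Finset.single_le_sum
        (f := fun l => ⌈h (addE x l)⌉₊) (fun i _ => Nat.zero_le _) (Finset.mem_univ l))
        (Nat.le_add_left _ _)) hM
    have heq1 : min (h x) (M:ℝ) = h x :=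
      min_eq_left (le_trans (Nat.le_ceil _) (by exact_mod_cast hc1))
    have heq2 : min (h (subOne x)) (M:ℝ) = h (subOne x) :=
      min_eq_left (le_trans (Nat.le_ceil _) (by exact_mod_cast hc2))
    have heq3 : ∀ l, min (h (addE x l)) (M:ℝ) = h (addE x l) :=
      fun l => min_eq_left (le_trans (Nat.le_ceil _) (by exact_mod_cast hc3 l))
    have hPop : Pop n k (fun y => min (h y) (M:ℝ)) x = Pop n k h x := by
      rw [Pop, Pop, heq2, Finset.sum_congr rfl (fun l _ => by rw [heq3 l])]
    rw [hPop, heq1]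
  have hlim := tendsto_tsum_of_dominated_convergence hbound_sum hpt
    (Filter.Eventually.of_forall hdom)
  have hfun : (fun M : ℕ => ∑' x,
      π x * (Pop n k (fun y => min (h y) (M:ℝ)) x - min (h x) (M:ℝ))) = fun _ => (0:ℝ) :=
    funext hzero
  rw [hfun] at hlim
  exact tendsto_nhds_unique hlim tendsto_const_nhds

lemma SV_subOne_le (x : St n) : SV (subOne x) ≤ SV x :=
  Finset.sum_le_sum fun i _ => by
    have : x i - 1 ≤ x i := Nat.sub_le _ _
    exact_mod_cast this

lemma SV_le_subOne_add (x : St n) : SV x ≤ SV (subOne x) + ((n-1:ℕ):ℝ) := by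
  have hterm : ∀ i : Fin (n-1), (x i : ℝ) ≤ ((x i - 1 : ℕ):ℝ) + 1 := fun i => by
    have : x i ≤ (x i - 1) + 1 := by omega
    exact_mod_cast this
  calc SV x ≤ ∑ i, (((x i - 1 : ℕ):ℝ) + 1) := Finset.sum_le_sum fun i _ => hterm i
    _ = SV (subOne x) + ((n-1:ℕ):ℝ) := by
        rw [Finset.sum_add_distrib, Finset.sum_const, Finset.card_univ, Fintype.card_fin,
          nsmul_eq_mul, mul_one]
        rfl

lemma bound_helper (hN : (3:ℝ) ≤ n) {s : ℝ} (h0 : 0 ≤ s) : 2*s + 1 ≤ 3*(n:ℝ)^2 * (s + 1) := by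
  nlinarith [mul_nonneg (show (0:ℝ) ≤ 3*(n:ℝ)^2 - 2 by nlinarith) h0]

lemma hdiff_SQ (hn : 3 ≤ n) (x : St n) (y : St n)
    (hy : y = subOne x ∨ ∃ l, y = addE x l) :
    |SQ y - SQ x| ≤ 3*(n:ℝ)^2 * (SV x + 1) := by
  have hN : (3:ℝ) ≤ n := by exact_mod_cast hn
  have h0 := SV_nonneg x
  rcases hy with rfl | ⟨l, rfl⟩
  · have h1 := SV_nonneg (subOne x)
    have h2 := SV_subOne_le x
    have h3 := SV_le_subOne_add x
    have hd : ((n-1:ℕ):ℝ) ≤ (n:ℝ) := by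
      have : (n - 1 : ℕ) ≤ n := Nat.sub_le _ _
      exact_mod_cast this
    rw [SQ, SQ, abs_of_nonpos (by nlinarith)]
    have key : (SV x - SV (subOne x)) * (SV x + SV (subOne x))
        ≤ (n:ℝ) * (SV x + SV (subOne x)) :=
      mul_le_mul_of_nonneg_right (by linarith) (by linarith)
    nlinarith [mul_nonneg (show (0:ℝ) ≤ 3*(n:ℝ)^2 - 2*n by nlinarith) h0]
  · rw [SQ, SQ, SV_addE]
    rw [show (SV x + 1)^2 - (SV x)^2 = 2*SV x + 1 from by ring,
      abs_of_nonneg (by linarith)]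
    exact bound_helper hN h0

lemma hdiff_Q2 (hn : 3 ≤ n) (x : St n) (y : St n)
    (hy : y = subOne x ∨ ∃ l, y = addE x l) :
    |Q2 y - Q2 x| ≤ 3*(n:ℝ)^2 * (SV x + 1) := by
  have hN : (3:ℝ) ≤ n := by exact_mod_cast hn
  have h0 := SV_nonneg x
  rcases hy with rfl | ⟨l, rfl⟩
  · have hub : Q2 (subOne x) ≤ Q2 x := Finset.sum_le_sum fun i _ => by
      have h1 : ((x i - 1 : ℕ):ℝ) ≤ (x i : ℝ) := by
        have : x i - 1 ≤ x i := Nat.sub_le _ _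
        exact_mod_cast this
      exact pow_le_pow_left₀ (Nat.cast_nonneg _) h1 2
    have hlb : Q2 x - 2 * SV x ≤ Q2 (subOne x) := by
      have hterm : ∀ i : Fin (n-1), (x i:ℝ)^2 - 2*(x i:ℝ) ≤ ((x i - 1 : ℕ):ℝ)^2 := by
        intro i
        rcases Nat.eq_zero_or_pos (x i) with hz | hp
        · simp [hz]
        · have h1 : 1 ≤ x i := hp
          have hc : ((x i - 1:ℕ):ℝ) = (x i:ℝ) - 1 := by push_cast [h1]; ring
          rw [hc]
          nlinarith
      calc Q2 x - 2*SV x = ∑ i, ((x i:ℝ)^2 - 2*(x i:ℝ)) := by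
            rw [Q2, SV, Finset.sum_sub_distrib, Finset.mul_sum]
        _ ≤ ∑ i, ((x i - 1 : ℕ):ℝ)^2 := Finset.sum_le_sum fun i _ => hterm i
        _ = Q2 (subOne x) := rfl
    rw [abs_of_nonpos (by linarith)]
    have := bound_helper (n := n) hN h0
    linarith
  · have heq : Q2 (addE x l) - Q2 x = 2*(x l:ℝ) + 1 := by rw [Q2_addE]; ring
    rw [heq, abs_of_nonneg (by positivity)]
    have hxl : (x l : ℝ) ≤ SV x :=
      Finset.single_le_sum (f := fun i => (x i:ℝ)) (fun i _ => Nat.cast_nonneg _)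
        (Finset.mem_univ l)
    have := bound_helper (n := n) hN h0
    linarith

end QBaux

open QBaux in
/-- expected number of stored qubits in steady state. -/
theorem stmt_1 (n k : ℕ) (hn : 3 ≤ n) (hk : n < k)
    (π : (Fin (n-1) → ℕ) → ℝ) (hπ : IsStationaryChain n k π)
    (hmom : Summable (fun x : Fin (n-1) → ℕ => π x * ∑ i, (x i : ℝ))) :
    (∑' x : Fin (n-1) → ℕ, π x * ∑ i, (x i : ℝ))
      = (k : ℝ) * ((n:ℝ) - 1) / (2 * ((k:ℝ) - n)) ∧
    (∑' x : {x : Fin (n-1) → ℕ // numZeros x = 0}, π x.1 * ∑ i, (x.1 i : ℝ))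
      = (k : ℝ) * ((n:ℝ) - 1) * (2 * (k:ℝ) - n)
          / (2 * n * ((k:ℝ) - n) * ((k:ℝ) - ((n:ℝ) - 1))) ∧
    (∑' x : {x : Fin (n-1) → ℕ // 1 ≤ numZeros x ∧ numZeros x ≤ n - 2},
        π x.1 * ∑ i, (x.1 i : ℝ))
      = (k : ℝ) * ((n:ℝ) - 1) * ((n:ℝ) - 2) / (2 * n * ((k:ℝ) - ((n:ℝ) - 1))) := by
  classical
  have hpos := hπ.1
  have hsumπ := hπ.2.1
  have htot := hπ.2.2.1
  have hmomSV : Summable (fun x : St n => π x * SV x) := hmom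
  -- the three balance equations
  have hb1 := balance hn hk hπ SV SV_nonneg hmomSV
  have E1 : ∑' x : St n, π x * (if numZeros x = 0
      then -(((n:ℝ)-1)*((k:ℝ)-n)/k) else 1) = 0 := by
    rw [← hb1]
    refine tsum_congr fun x => ?_
    rw [drift_SV hn hk x]
    ring
  have hb2 := trunc_balance hn hk hπ hmomSV SQ SQ_nonneg
    (fun x => hdiff_SQ hn x _ (Or.inl rfl))
    (fun x l => hdiff_SQ hn x _ (Or.inr ⟨l, rfl⟩))
  have E2 : ∑' x : St n, π x * (if numZeros x = 0
      then -(2*((n:ℝ)-1)*((k:ℝ)-n)/k) * SV x + (((n:ℝ)-1)^2*((k:ℝ)-n+1) + ((n:ℝ)-1))/k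
      else 2 * SV x + 1) = 0 := by
    rw [← hb2]
    refine tsum_congr fun x => ?_
    rw [drift_SQ hn hk x]
    ring
  have hb3 := trunc_balance hn hk hπ hmomSV Q2 Q2_nonneg
    (fun x => hdiff_Q2 hn x _ (Or.inl rfl))
    (fun x l => hdiff_Q2 hn x _ (Or.inr ⟨l, rfl⟩))
  have E3 : ∑' x : St n, π x * (if numZeros x = 0
      then -(2*((k:ℝ)-n)/k) * SV x + ((n:ℝ)-1)*((k:ℝ)-n+2)/k
      else 2 * SV x / k + 1) = 0 := by
    rw [← hb3]
    refine tsum_congr fun x => ?_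
    rw [drift_Q2 hn hk x]
    ring
  -- summability of the indicator pieces
  have hsA : Summable (fun x : St n => if numZeros x = 0 then π x * SV x else 0) := by
    refine (hmomSV.indicator {x : St n | numZeros x = 0}).congr fun x => ?_
    by_cases hx : numZeros x = 0 <;> simp [Set.indicator_apply, hx]
  have hsC : Summable (fun x : St n => if numZeros x = 0 then 0 else π x * SV x) := by
    refine (hmomSV.indicator {x : St n | ¬ numZeros x = 0}).congr fun x => ?_
    by_cases hx : numZeros x = 0 <;> simp [Set.indicator_apply, hx]
  have hsP0 : Summable (fun x : St n => if numZeros x = 0 then π x else 0) := by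
    refine (hsumπ.indicator {x : St n | numZeros x = 0}).congr fun x => ?_
    by_cases hx : numZeros x = 0 <;> simp [Set.indicator_apply, hx]
  have hsP1 : Summable (fun x : St n => if numZeros x = 0 then 0 else π x) := by
    refine (hsumπ.indicator {x : St n | ¬ numZeros x = 0}).congr fun x => ?_
    by_cases hx : numZeros x = 0 <;> simp [Set.indicator_apply, hx]
  -- rewrite the balance equations in terms of the four sums
  have hfun1 : (fun x : St n => π x * (if numZeros x = 0
      then -(((n:ℝ)-1)*((k:ℝ)-n)/k) else 1))
      = fun x : St n => (-(((n:ℝ)-1)*((k:ℝ)-n)/k)) * (if numZeros x = 0 then π x else 0)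
          + (if numZeros x = 0 then 0 else π x) := by
    funext x
    by_cases hx : numZeros x = 0 <;> simp [hx] <;> ring
  rw [hfun1, Summable.tsum_add (hsP0.mul_left _) hsP1, tsum_mul_left] at E1
  have hfun2 : (fun x : St n => π x * (if numZeros x = 0
      then -(2*((n:ℝ)-1)*((k:ℝ)-n)/k) * SV x + (((n:ℝ)-1)^2*((k:ℝ)-n+1) + ((n:ℝ)-1))/k
      else 2 * SV x + 1))
      = fun x : St n => (-(2*((n:ℝ)-1)*((k:ℝ)-n)/k)) * (if numZeros x = 0 then π x * SV x else 0)
          + (((((n:ℝ)-1)^2*((k:ℝ)-n+1) + ((n:ℝ)-1))/k) * (if numZeros x = 0 then π x else 0)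
            + ((2:ℝ) * (if numZeros x = 0 then 0 else π x * SV x)
              + (if numZeros x = 0 then 0 else π x))) := by
    funext x
    by_cases hx : numZeros x = 0 <;> simp [hx] <;> ring
  rw [hfun2, Summable.tsum_add (hsA.mul_left _) ((hsP0.mul_left _).add ((hsC.mul_left _).add hsP1)),
    Summable.tsum_add (hsP0.mul_left _) ((hsC.mul_left _).add hsP1),
    Summable.tsum_add (hsC.mul_left _) hsP1, tsum_mul_left, tsum_mul_left, tsum_mul_left] at E2
  have hfun3 : (fun x : St n => π x * (if numZeros x = 0
      then -(2*((k:ℝ)-n)/k) * SV x + ((n:ℝ)-1)*((k:ℝ)-n+2)/k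
      else 2 * SV x / k + 1))
      = fun x : St n => (-(2*((k:ℝ)-n)/k)) * (if numZeros x = 0 then π x * SV x else 0)
          + ((((n:ℝ)-1)*((k:ℝ)-n+2)/k) * (if numZeros x = 0 then π x else 0)
            + (((2:ℝ)/k) * (if numZeros x = 0 then 0 else π x * SV x)
              + (if numZeros x = 0 then 0 else π x))) := by
    funext x
    by_cases hx : numZeros x = 0 <;> simp [hx] <;> ring
  rw [hfun3, Summable.tsum_add (hsA.mul_left _) ((hsP0.mul_left _).add ((hsC.mul_left _).add hsP1)),
    Summable.tsum_add (hsP0.mul_left _) ((hsC.mul_left _).add hsP1),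
    Summable.tsum_add (hsC.mul_left _) hsP1, tsum_mul_left, tsum_mul_left, tsum_mul_left] at E3
  -- names
  set A := ∑' x : St n, (if numZeros x = 0 then π x * SV x else 0) with hA
  set C := ∑' x : St n, (if numZeros x = 0 then 0 else π x * SV x) with hC
  set P0 := ∑' x : St n, (if numZeros x = 0 then π x else 0) with hP0
  set P1 := ∑' x : St n, (if numZeros x = 0 then 0 else π x) with hP1
  have hTot : P0 + P1 = 1 := by
    rw [hP0, hP1, ← Summable.tsum_add hsP0 hsP1, ← htot]
    refine tsum_congr fun x => ?_
    by_cases hx : numZeros x = 0 <;> simp [hx]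
  have hStot : (∑' x : St n, π x * SV x) = A + C := by
    rw [hA, hC, ← Summable.tsum_add hsA hsC]
    refine tsum_congr fun x => ?_
    by_cases hx : numZeros x = 0 <;> simp [hx]
  -- cast facts
  have hN3 : (3:ℝ) ≤ (n:ℝ) := by exact_mod_cast hn
  have hNK : (n:ℝ) < (k:ℝ) := by exact_mod_cast hk
  have hK0 : (k:ℝ) ≠ 0 := by intro h; rw [h] at hNK; linarith
  have hKN : (k:ℝ) - n ≠ 0 := by intro h; nlinarith
  have hN0 : (n:ℝ) ≠ 0 := by intro h; linarith
  have hKN1 : (k:ℝ) - n + 1 ≠ 0 := by intro h; nlinarith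
  -- solve the linear system
  have e1 : ((n:ℝ)-1)*((k:ℝ)-n)*P0 = (k:ℝ)*P1 := by field_simp at E1; linarith
  have hP0m : P0 * ((n:ℝ)*((k:ℝ)-n+1)) = (k:ℝ) := by linear_combination e1 + (k:ℝ)*hTot
  have hP1m : P1 * ((n:ℝ)*((k:ℝ)-n+1)) = ((n:ℝ)-1)*((k:ℝ)-n) := by
    linear_combination ((n:ℝ)*((k:ℝ)-n+1))*hTot - hP0m
  have e2 : (-(2*((n:ℝ)-1)*((k:ℝ)-n))*A + ((((n:ℝ)-1)^2*((k:ℝ)-n+1)+((n:ℝ)-1))*P0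
      + (2*(k:ℝ)*C + (k:ℝ)*P1))) = 0 := by
    have h := congrArg (fun t => (k:ℝ) * t) E2
    simp only [mul_zero] at h
    field_simp at h
    have h2 : (-(2*((n:ℝ)-1)*((k:ℝ)-n))*A + ((((n:ℝ)-1)^2*((k:ℝ)-n+1)+((n:ℝ)-1))*P0
        + (2*(k:ℝ)*C + (k:ℝ)*P1))) * ((k:ℝ)*(k:ℝ)) = 0 := by
      linear_combination ((k:ℝ)*(k:ℝ)) * h
    rcases mul_eq_zero.1 h2 with h3 | h3
    · exact h3
    · exact absurd h3 (mul_ne_zero hK0 hK0)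
  have e3 : (-(2*((k:ℝ)-n))*A + (((n:ℝ)-1)*((k:ℝ)-n+2)*P0 + (2*C + (k:ℝ)*P1))) = 0 := by
    have h := congrArg (fun t => (k:ℝ) * t) E3
    simp only [mul_zero] at h
    field_simp at h
    have h2 : (-(2*((k:ℝ)-n))*A + (((n:ℝ)-1)*((k:ℝ)-n+2)*P0 + (2*C + (k:ℝ)*P1)))
        * ((k:ℝ)*(k:ℝ)) = 0 := by
      linear_combination ((k:ℝ)*(k:ℝ)) * h
    rcases mul_eq_zero.1 h2 with h3 | h3
    · exact h3
    · exact absurd h3 (mul_ne_zero hK0 hK0)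
  have hC2 : C * (2*(n:ℝ)*((k:ℝ)-n+1)) = (k:ℝ)*((n:ℝ)-1)*((n:ℝ)-2) := by
    have hCm : (C * (2*(n:ℝ)*((k:ℝ)-n+1))) * ((k:ℝ)-n+1)
        = ((k:ℝ)*((n:ℝ)-1)*((n:ℝ)-2)) * ((k:ℝ)-n+1) := by
      linear_combination (-((n:ℝ)*((k:ℝ)-n+1)*((n:ℝ)-1)))*e3 + ((n:ℝ)*((k:ℝ)-n+1))*e2
        + (((n:ℝ)-1)*((n:ℝ)-2))*hP0m + (((n:ℝ)-2)*(k:ℝ))*hP1m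
    exact mul_right_cancel₀ hKN1 hCm
  have hA2 : A * (2*(n:ℝ)*((k:ℝ)-n)*((k:ℝ)-n+1)) = (k:ℝ)*((n:ℝ)-1)*(2*(k:ℝ)-n) := by
    linear_combination (-((n:ℝ)*((k:ℝ)-n+1)))*e3 + (((n:ℝ)-1)*((k:ℝ)-n+2))*hP0m
      + (k:ℝ)*hP1m + hC2
  -- subtype sums
  have hsub0 : (∑' x : {x : Fin (n-1) → ℕ // numZeros x = 0}, π x.1 * ∑ i, (x.1 i : ℝ)) = A := by
    rw [hA]
    exact (tsum_subtype {x : St n | numZeros x = 0} (fun x => π x * SV x)).trans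
      (tsum_congr fun x => by by_cases hx : numZeros x = 0 <;> simp [Set.indicator_apply, hx])
  have hsub1 : (∑' x : {x : Fin (n-1) → ℕ // 1 ≤ numZeros x ∧ numZeros x ≤ n - 2},
      π x.1 * ∑ i, (x.1 i : ℝ)) = C := by
    rw [hC]
    refine (tsum_subtype {x : St n | 1 ≤ numZeros x ∧ numZeros x ≤ n - 2}
      (fun x => π x * SV x)).trans (tsum_congr fun x => ?_)
    by_cases h0 : numZeros x = 0
    · rw [Set.indicator_apply, if_neg (fun hmem => by
        have := hmem.1
        omega), if_pos h0]
    · by_cases h2 : numZeros x ≤ n - 2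
      · rw [Set.indicator_apply, if_pos (show x ∈ {x : St n | 1 ≤ numZeros x ∧ numZeros x ≤ n - 2}
          from ⟨by omega, h2⟩), if_neg h0]
      · have hz : numZeros x = n - 1 := by have := numZeros_le x; omega
        rw [Set.indicator_apply, if_neg (fun hmem => by
          have := hmem.2
          omega), if_neg h0, SV_full hz, mul_zero]
  have hKN1' : (k:ℝ) - ((n:ℝ) - 1) ≠ 0 := by intro h; apply hKN1; linarith
  refine ⟨?_, ?_, ?_⟩
  · rw [show (∑' x : Fin (n-1) → ℕ, π x * ∑ i, (x i : ℝ)) = A + C from hStot,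
      eq_div_iff (mul_ne_zero two_ne_zero hKN)]
    have h : ((A+C)*(2*((k:ℝ)-n))) * ((n:ℝ)*((k:ℝ)-n+1))
        = ((k:ℝ)*((n:ℝ)-1)) * ((n:ℝ)*((k:ℝ)-n+1)) := by
      linear_combination hA2 + ((k:ℝ)-n)*hC2
    exact mul_right_cancel₀ (mul_ne_zero hN0 hKN1) h
  · rw [hsub0, eq_div_iff (mul_ne_zero (mul_ne_zero (mul_ne_zero two_ne_zero hN0) hKN) hKN1')]
    linear_combination hA2
  · rw [hsub1, eq_div_iff (mul_ne_zero (mul_ne_zero two_ne_zero hN0) hKN1')]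
    linear_combination hC2
end
end

section
/- Let b ∈ ℝ and define V(x) = ∑_{i=1}^{n−1} x_i² + b·∑_{1≤i<l≤n−1} x_i x_l. For every x = (x_1,…,x_{n−1}) with all x_i ≥ 2, the quantity k·Δ_V(x) := (k−n+1)(V(x−1)−V(x)) + ∑_{l=1}^{n−1}(V(x+e_l)−V(x)) satisfies k·Δ_V(x) = −(k−n)(2 + b(n−2))·∑_{i=1}^{n−1} x_i + (n−1)(k−n+2 + b(k−n+1)(n−2)/2). -/
open scoped BigOperators

noncomputable section

/-- The Lyapunov function `V(x) = ∑ x_i² + b ∑_{i<l} x_i x_l`. -/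
noncomputable def V (n : ℕ) (b : ℝ) (x : Fin (n-1) → ℕ) : ℝ :=
  (∑ i, (x i : ℝ) ^ 2)
    + b * ∑ i : Fin (n-1), ∑ l : Fin (n-1),
        (if i < l then (x i : ℝ) * (x l : ℝ) else 0)

lemma pair_sum {m : ℕ} (a : Fin m → ℝ) :
    ∑ i, ∑ l, (if i < l then a i * a l else 0)
      = ((∑ i, a i)^2 - ∑ i, a i^2)/2 := by
  have hsq : (∑ i, a i)^2 = ∑ i, ∑ l, a i * a l := by
    rw [sq, Finset.sum_mul_sum]
  have h2 : ∑ i : Fin m, ∑ l, a i * a l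
      = (∑ i : Fin m, ∑ l, if i < l then a i * a l else 0)
        + (∑ i : Fin m, ∑ l, if l < i then a i * a l else 0)
        + ∑ i, a i ^ 2 := by
    rw [← Finset.sum_add_distrib, ← Finset.sum_add_distrib]
    refine Finset.sum_congr rfl fun i _ => ?_
    have : a i ^ 2 = ∑ l : Fin m, if i = l then a i * a l else 0 := by
      rw [Finset.sum_ite_eq]
      simp [sq]
    rw [this, ← Finset.sum_add_distrib]
    rw [← Finset.sum_add_distrib]
    apply Finset.sum_congr rfl
    intro l _
    rcases lt_trichotomy i l with h | h | h
    · simp [h, h.ne, asymm h]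
    · simp [h]
    · simp [h, h.ne', asymm h]
  have h3 : ∑ i : Fin m, ∑ l, (if l < i then a i * a l else 0)
      = ∑ i : Fin m, ∑ l, (if i < l then a i * a l else 0) := by
    rw [Finset.sum_comm]
    exact Finset.sum_congr rfl fun i _ => Finset.sum_congr rfl fun l _ => by
      rcases lt_or_ge i l with h | h <;> simp [h, mul_comm, not_lt_of_ge]
  rw [h2, h3] at hsq
  linarith

/-- the drift of `Y` on `S - S⋆` (all coordinates `≥ 2`). -/
theorem stmt_7 (n k : ℕ) (hn : 3 ≤ n) (hk : n ≤ k) (b : ℝ)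
    (x : Fin (n-1) → ℕ) (hx : ∀ i, 2 ≤ x i) :
    ((k:ℝ) - n + 1) * (V n b (subOne x) - V n b x)
        + ∑ l : Fin (n-1), (V n b (addE x l) - V n b x)
      = -(((k:ℝ) - n) * (2 + b * ((n:ℝ) - 2))) * (∑ i, (x i : ℝ))
        + ((n:ℝ) - 1) * ((k:ℝ) - n + 2 + b * ((k:ℝ) - n + 1) * ((n:ℝ) - 2) / 2) := by
  have hcard : (Finset.univ : Finset (Fin (n-1))).card = n - 1 := by simp
  have hcardR : ((n - 1 : ℕ) : ℝ) = (n:ℝ) - 1 := by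
    have : 1 ≤ n := by omega
    push_cast [this]
    ring
  set s1 := ∑ i, (x i : ℝ) with hs1
  set s2 := ∑ i, (x i : ℝ)^2 with hs2
  have hV : ∀ y : Fin (n-1) → ℕ,
      V n b y = (∑ i, (y i : ℝ)^2)
        + b/2 * ((∑ i, (y i : ℝ))^2 - ∑ i, (y i : ℝ)^2) := by
    intro y
    rw [V, pair_sum]
    ring
  -- subOne casts
  have hsubc : ∀ i, ((subOne x i : ℕ) : ℝ) = (x i : ℝ) - 1 := by
    intro i
    have h1 : 1 ≤ x i := le_trans (by norm_num) (hx i)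
    simp [subOne, Nat.cast_sub h1]
  have hsub1 : ∑ i, ((subOne x i : ℕ) : ℝ) = s1 - ((n:ℝ) - 1) := by
    rw [Finset.sum_congr rfl fun i _ => hsubc i, Finset.sum_sub_distrib]
    simp [hcard, hcardR, hs1]
  have hsub2 : ∑ i, ((subOne x i : ℕ) : ℝ)^2 = s2 - 2*s1 + ((n:ℝ) - 1) := by
    have : ∀ i : Fin (n-1), ((subOne x i : ℕ) : ℝ)^2 = (x i:ℝ)^2 - 2*(x i:ℝ) + 1 := by
      intro i; rw [hsubc i]; ring
    rw [Finset.sum_congr rfl fun i _ => this i]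
    rw [Finset.sum_add_distrib, Finset.sum_sub_distrib, ← Finset.mul_sum]
    simp [hcard, hcardR, hs1, hs2]
  -- addE sums
  have haddc : ∀ l i, ((addE x l i : ℕ) : ℝ)
      = Function.update (fun j => (x j : ℝ)) l ((x l : ℝ) + 1) i := by
    intro l i
    rw [addE]
    rw [show ((Function.update x l (x l + 1) i : ℕ) : ℝ)
        = Function.update (fun j => ((x j : ℕ) : ℝ)) l (((x l + 1 : ℕ) : ℝ)) i from
      (Function.apply_update (fun _ m => ((m : ℕ) : ℝ)) x l (x l + 1) i)]
    push_cast
    rfl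
  have hadd1 : ∀ l, ∑ i, ((addE x l i : ℕ) : ℝ) = s1 + 1 := by
    intro l
    rw [Finset.sum_congr rfl fun i _ => haddc l i]
    rw [Finset.sum_update_of_mem (Finset.mem_univ l)]
    rw [hs1, ← Finset.add_sum_erase _ _ (Finset.mem_univ l), Finset.erase_eq]
    ring
  have hadd2 : ∀ l, ∑ i, ((addE x l i : ℕ) : ℝ)^2 = s2 + 2*(x l:ℝ) + 1 := by
    intro l
    have : ∀ i : Fin (n-1), ((addE x l i : ℕ) : ℝ)^2
        = Function.update (fun j => (x j : ℝ)^2) l (((x l : ℝ) + 1)^2) i := by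
      intro i
      rw [haddc l i]
      exact Function.apply_update (fun _ r => r^2) (fun j => (x j : ℝ)) l ((x l:ℝ)+1) i
    rw [Finset.sum_congr rfl fun i _ => this i]
    rw [Finset.sum_update_of_mem (Finset.mem_univ l)]
    rw [hs2, ← Finset.add_sum_erase _ _ (Finset.mem_univ l), Finset.erase_eq]
    ring
  have hstep : ∀ l, V n b (addE x l) - V n b x
      = 2*(x l:ℝ) + 1 + b/2 * ((s1+1)^2 - s1^2 - (2*(x l:ℝ)+1)) := by
    intro l
    rw [hV, hV, hadd1 l, hadd2 l, ← hs1, ← hs2]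
    ring
  rw [Finset.sum_congr rfl fun l _ => hstep l]
  rw [hV, hV, hsub1, hsub2, ← hs1, ← hs2]
  rw [Finset.sum_add_distrib, Finset.sum_add_distrib, ← Finset.mul_sum, ← Finset.mul_sum]
  rw [← hs1]
  have hone : ∑ _i : Fin (n-1), (1:ℝ) = (n:ℝ) - 1 := by
    rw [Finset.sum_const, hcard]
    simp [hcardR]
  have hinner : ∑ i : Fin (n-1), ((s1+1)^2 - s1^2 - (2*(x i:ℝ)+1))
      = ((n:ℝ)-1)*((s1+1)^2 - s1^2) - (2*s1 + ((n:ℝ)-1)) := by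
    rw [Finset.sum_sub_distrib, Finset.sum_add_distrib, ← Finset.mul_sum, ← hs1,
      Finset.sum_const, Finset.sum_const, hcard]
    simp [hcardR]
  rw [hone, hinner]
  ring
end
end

section
/- Let k, J, L be integers with k > J ≥ 2, L ≥ 0, and let g : ℕ → ℝ. For 0 ≤ m ≤ J define F_m(g;J,L) = ∑_{n_1≥2,…,n_m≥2, n_{m+1}≥0,…,n_J≥0} ((L+n_1+…+n_J)!/(n_1!·…·n_J!))·(1/k)^{n_1+…+n_J}·g(n_J). Assume the families defining F_{m−1}(g;J,L), F_{m−1}(g;J−1,L) and F_{m−1}(g;J−1,L+1) are absolutely summable. Then for every m with 1 ≤ m ≤ J−1 (and also for m = J when g ≡ 1), F_m(g;J,L) is finite and F_m(g;J,L) = F_{m−1}(g;J,L) − F_{m−1}(g;J−1,L) − (1/k)·F_{m−1}(g;J−1,L+1). -/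
open scoped BigOperators

noncomputable section

/-- The summand of `F_m(g;J,L)` (the constraint `n_i ≥ 2` for `i ≤ m` is imposed
on the index set, not here). -/
noncomputable def Fterm (k : ℕ) (g : ℕ → ℝ) (J L : ℕ) (v : Fin J → ℕ) : ℝ :=
  ((L + ∑ i, v i).factorial : ℝ) / (∏ i, ((v i).factorial : ℝ))
    * (1 / (k:ℝ)) ^ (∑ i, v i)
    * g (if h : 0 < J then v ⟨J - 1, by omega⟩ else 0)

/-- The index set of `F_m(g;J,L)`: tuples whose first `m` coordinates are `≥ 2`. -/
def FIdx (m J : ℕ) : Type :=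
  {v : Fin J → ℕ // ∀ i : Fin J, (i : ℕ) < m → 2 ≤ v i}

/-- `F_m(g;J,L)`. -/
noncomputable def Fsum (k : ℕ) (g : ℕ → ℝ) (m J L : ℕ) : ℝ :=
  ∑' v : FIdx m J, Fterm k g J L v.1

/-- Non-dependent wrapper around `Fin.insertNth`. -/
def insF {J : ℕ} (p : Fin (J+1)) (x : ℕ) (v : Fin J → ℕ) : Fin (J+1) → ℕ :=
  p.insertNth x v

@[simp] lemma insF_same {J : ℕ} (p : Fin (J+1)) (x : ℕ) (v : Fin J → ℕ) :
    insF p x v p = x := Fin.insertNth_apply_same (α := fun _ => ℕ) p x v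

@[simp] lemma insF_succAbove {J : ℕ} (p : Fin (J+1)) (x : ℕ) (v : Fin J → ℕ) (j : Fin J) :
    insF p x v (p.succAbove j) = v j := Fin.insertNth_apply_succAbove (α := fun _ => ℕ) p x v j

lemma removeNth_insF {J : ℕ} (p : Fin (J+1)) (x : ℕ) (v : Fin J → ℕ) :
    p.removeNth (insF p x v) = v := Fin.removeNth_insertNth (α := fun _ => ℕ) p x v

lemma insF_self_removeNth {J : ℕ} (p : Fin (J+1)) (w : Fin (J+1) → ℕ) :
    insF p (w p) (p.removeNth w) = w := Fin.insertNth_self_removeNth (α := fun _ => ℕ) p w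

lemma ins_mem {m J : ℕ} (h : m ≤ J) (x : ℕ) (v : Fin J → ℕ)
    (hv : ∀ i : Fin J, (i:ℕ) < m → 2 ≤ v i) :
    ∀ i : Fin (J+1), (i:ℕ) < m → 2 ≤ insF ⟨m, by omega⟩ x v i := by
  intro i hi
  have hip : i < (⟨m, by omega⟩ : Fin (J+1)) := by rw [Fin.lt_def]; exact hi
  have h2 := Fin.succAbove_castPred_of_lt (⟨m, by omega⟩ : Fin (J+1)) i hip
  rw [← h2, insF_succAbove]
  apply hv
  simpa using hi

lemma rem_mem {m J : ℕ} (h : m ≤ J) (w : Fin (J+1) → ℕ)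
    (hw : ∀ i : Fin (J+1), (i:ℕ) < m → 2 ≤ w i) :
    ∀ i : Fin J, (i:ℕ) < m → 2 ≤ (⟨m, by omega⟩ : Fin (J+1)).removeNth w i := by
  intro i hi
  have hc : (Fin.castSucc i) < (⟨m, by omega⟩ : Fin (J+1)) := by
    rw [Fin.lt_def]; simpa using hi
  have h2 : (⟨m, by omega⟩ : Fin (J+1)).succAbove i = Fin.castSucc i :=
    Fin.succAbove_of_castSucc_lt _ i hc
  show 2 ≤ w ((⟨m, by omega⟩ : Fin (J+1)).succAbove i)
  rw [h2]
  exact hw _ (by simpa using hi)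

/-- The equivalence between `FIdx (m+1) (J+1)` and the part of `FIdx m (J+1)` with
`m`-th coordinate at least `2`. -/
def eqA (m J : ℕ) (h : m ≤ J) :
    FIdx (m+1) (J+1) ≃ ↥{w : FIdx m (J+1) | 2 ≤ w.1 ⟨m, by omega⟩} where
  toFun v := ⟨⟨v.1, fun i hi => v.2 i (by omega)⟩, v.2 ⟨m, by omega⟩ (Nat.lt_succ_self m)⟩
  invFun w := ⟨w.1.1, fun i hi => by
    rcases Nat.lt_or_ge (i : ℕ) m with h' | h'
    · exact w.1.2 i h'
    · have hip : i = ⟨m, by omega⟩ := by ext; show (i:ℕ) = m; omega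
      rw [hip]; exact w.2⟩
  left_inv v := Subtype.ext rfl
  right_inv w := Subtype.ext (Subtype.ext rfl)

/-- The equivalence between `FIdx m J` and the part of `FIdx m (J+1)` with
`m`-th coordinate equal to `x`. -/
def eqIns (m J : ℕ) (h : m ≤ J) (x : ℕ) :
    FIdx m J ≃ ↥{w : FIdx m (J+1) | w.1 ⟨m, by omega⟩ = x} where
  toFun v := ⟨⟨insF ⟨m, by omega⟩ x v.1, ins_mem h x v.1 v.2⟩, insF_same _ x v.1⟩
  invFun w := ⟨(⟨m, by omega⟩ : Fin (J+1)).removeNth w.1.1, rem_mem h w.1.1 w.1.2⟩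
  left_inv v := Subtype.ext (removeNth_insF _ x v.1)
  right_inv w := by
    apply Subtype.ext; apply Subtype.ext
    have hx : w.1.1 ⟨m, by omega⟩ = x := w.2
    show insF ⟨m, by omega⟩ x ((⟨m, by omega⟩ : Fin (J+1)).removeNth w.1.1) = w.1.1
    have h2 := insF_self_removeNth (⟨m, by omega⟩ : Fin (J+1)) w.1.1
    rw [hx] at h2
    exact h2

theorem step_aux (k : ℕ) (g : ℕ → ℝ) (J L m : ℕ) (hmJ : m ≤ J)
    (hg : m = J → ∀ i, g i = 1)
    (h1 : Summable (fun v : FIdx m (J+1) => |Fterm k g (J+1) L v.1|)) :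
    Summable (fun v : FIdx (m+1) (J+1) => Fterm k g (J+1) L v.1) ∧
    Fsum k g (m+1) (J+1) L
      = Fsum k g m (J+1) L - Fsum k g m J L - (1 / (k:ℝ)) * Fsum k g m J (L+1) := by
  classical
  set p : Fin (J+1) := ⟨m, by omega⟩ with hp
  set f : FIdx m (J+1) → ℝ := fun w => Fterm k g (J+1) L w.1 with hfdef
  have hsum : Summable f := by
    rw [← summable_abs_iff]; exact h1
  -- sums and products under insertion
  have hsum_ins : ∀ (x : ℕ) (v : Fin J → ℕ), ∑ i, insF p x v i = x + ∑ i, v i := by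
    intro x v
    rw [Fin.sum_univ_succAbove (insF p x v) p]
    simp
  have hprod_ins : ∀ (x : ℕ) (v : Fin J → ℕ),
      (∏ i, (((insF p x v i).factorial : ℕ) : ℝ))
        = (x.factorial : ℝ) * ∏ i, (((v i).factorial : ℕ) : ℝ) := by
    intro x v
    rw [Fin.prod_univ_succAbove (fun i => (((insF p x v i).factorial : ℕ) : ℝ)) p]
    simp
  -- the g-argument
  have hglast : ∀ (x : ℕ) (v : Fin J → ℕ),
      g (insF p x v ⟨J, by omega⟩) = g (if h : 0 < J then v ⟨J-1, by omega⟩ else 0) := by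
    intro x v
    rcases eq_or_lt_of_le hmJ with hEq | hlt
    · rw [hg hEq, hg hEq]
    · have hJ1 : 0 < J := by omega
      rw [dif_pos hJ1]
      have hsa : p.succAbove ⟨J-1, by omega⟩ = ⟨J, by omega⟩ := by
        rw [Fin.succAbove_of_le_castSucc]
        · ext; simp [Fin.val_succ]; omega
        · rw [Fin.le_def]; show m ≤ J - 1; omega
      rw [← hsa, insF_succAbove]
  have key : ∀ (x : ℕ) (v : Fin J → ℕ),
      Fterm k g (J+1) L (insF p x v)
        = ((L + x + ∑ i, v i).factorial : ℝ)
            / ((x.factorial : ℝ) * ∏ i, ((v i).factorial : ℝ))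
          * (1/(k:ℝ))^(x + ∑ i, v i)
          * g (if h : 0 < J then v ⟨J-1, by omega⟩ else 0) := by
    intro x v
    unfold Fterm
    rw [dif_pos (by omega : 0 < J + 1)]
    simp only [show J + 1 - 1 = J from rfl]
    rw [hsum_ins, hprod_ins, ← hglast x v]
    have h' : (L + (x + ∑ i, v i)) = (L + x + ∑ i, v i) := by omega
    rw [h']
  have key0 : ∀ v : Fin J → ℕ,
      Fterm k g (J+1) L (insF p 0 v) = Fterm k g J L v := by
    intro v
    rw [key 0 v]
    unfold Fterm
    simp
  have key1 : ∀ v : Fin J → ℕ,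
      Fterm k g (J+1) L (insF p 1 v) = (1/(k:ℝ)) * Fterm k g J (L+1) v := by
    intro v
    rw [key 1 v]
    unfold Fterm
    have h' : (L + 1 + ∑ i, v i) = (L + 1) + ∑ i, v i := by omega
    rw [h']
    simp [pow_add, pow_succ]
    ring
  -- the three parts
  set A : Set (FIdx m (J+1)) := {w | 2 ≤ w.1 p} with hA
  set B : Set (FIdx m (J+1)) := {w | w.1 p = 0} with hB
  set C : Set (FIdx m (J+1)) := {w | w.1 p = 1} with hC
  have hUnion : A ∪ B ∪ C = Set.univ := by
    ext w
    simp only [Set.mem_union, Set.mem_setOf_eq, Set.mem_univ, iff_true, hA, hB, hC]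
    omega
  have hdAB : Disjoint A B := by
    rw [Set.disjoint_left]
    intro w hwA hwB
    simp only [hA, hB, Set.mem_setOf_eq] at hwA hwB
    omega
  have hdABC : Disjoint (A ∪ B) C := by
    rw [Set.disjoint_left]
    intro w hwAB hwC
    simp only [hA, hB, hC, Set.mem_union, Set.mem_setOf_eq] at hwAB hwC
    omega
  have hsplit : (∑' x, f x) = (∑' x : ↥A, f x.1) + (∑' x : ↥B, f x.1) + (∑' x : ↥C, f x.1) := by
    calc (∑' x, f x) = ∑' x : ↥(Set.univ : Set (FIdx m (J+1))), f x.1 := (tsum_univ f).symm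
      _ = ∑' x : ↥(A ∪ B ∪ C), f x.1 := by rw [hUnion]
      _ = (∑' x : ↥(A ∪ B), f x.1) + (∑' x : ↥C, f x.1) :=
          (hsum.subtype _).tsum_union_disjoint hdABC (hsum.subtype _)
      _ = (∑' x : ↥A, f x.1) + (∑' x : ↥B, f x.1) + (∑' x : ↥C, f x.1) := by
          rw [(hsum.subtype _).tsum_union_disjoint hdAB (hsum.subtype _)]
  have hsA : Summable (fun x : ↥A => f x.1) := hsum.subtype A
  have hTarget : Summable (fun v : FIdx (m+1) (J+1) => Fterm k g (J+1) L v.1) :=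
    (Equiv.summable_iff (eqA m J hmJ) (f := fun x : ↥A => f x.1)).2 hsA
  refine ⟨hTarget, ?_⟩
  have EA : (∑' x : ↥A, f x.1) = Fsum k g (m+1) (J+1) L := by
    rw [Fsum]
    exact (Equiv.tsum_eq (eqA m J hmJ) (fun x : ↥A => f x.1)).symm
  have EB : (∑' x : ↥B, f x.1) = Fsum k g m J L := by
    rw [Fsum]
    rw [← Equiv.tsum_eq (eqIns m J hmJ 0) (fun x : ↥B => f x.1)]
    exact tsum_congr fun v => key0 v.1
  have EC : (∑' x : ↥C, f x.1) = (1/(k:ℝ)) * Fsum k g m J (L+1) := by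
    rw [Fsum, ← tsum_mul_left]
    rw [← Equiv.tsum_eq (eqIns m J hmJ 1) (fun x : ↥C => f x.1)]
    exact tsum_congr fun v => key1 v.1
  have hFs : Fsum k g m (J+1) L = ∑' x, f x := rfl
  rw [hFs, hsplit, EA, EB, EC]
  ring

/-- the recursion for `F_m(g;J,L)`. -/
theorem stmt_9 (k J L : ℕ) (hJ : 2 ≤ J) (hk : J < k) (g : ℕ → ℝ) (m : ℕ)
    (h1 : Summable (fun v : FIdx (m-1) J => |Fterm k g J L v.1|))
    (h2 : Summable (fun v : FIdx (m-1) (J-1) => |Fterm k g (J-1) L v.1|))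
    (h3 : Summable (fun v : FIdx (m-1) (J-1) => |Fterm k g (J-1) (L+1) v.1|))
    (hm : (1 ≤ m ∧ m ≤ J - 1) ∨ (m = J ∧ ∀ i, g i = 1)) :
    Summable (fun v : FIdx m J => Fterm k g J L v.1) ∧
    Fsum k g m J L
      = Fsum k g (m-1) J L - Fsum k g (m-1) (J-1) L
        - (1 / (k:ℝ)) * Fsum k g (m-1) (J-1) (L+1) := by
  have hm1 : 1 ≤ m := by rcases hm with ⟨h, _⟩ | ⟨h, _⟩ <;> omega
  obtain ⟨m', rfl⟩ : ∃ m', m = m' + 1 := ⟨m - 1, by omega⟩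
  obtain ⟨J', rfl⟩ : ∃ J', J = J' + 1 := ⟨J - 1, by omega⟩
  rcases hm with ⟨_, h⟩ | ⟨hEq, hg1⟩
  · exact step_aux k g J' L m' (by omega) (fun hc => absurd hc (by omega)) h1
  · exact step_aux k g J' L m' (by omega) (fun _ => hg1) h1
end
end

section
/- Let n, k be integers with 3 ≤ n ≤ k, let a ∈ {−1,0,1,2,…}, and let g : ℕ → ℝ be such that for every l with 1 ≤ l ≤ n−2 and every L ≥ 0 the family defining F_0(g; n−l−1, L) is absolutely summable, where F_m(g;J,L) = ∑_{n_1≥2,…,n_m≥2, n_{m+1}≥0,…,n_J≥0} ((L+n_1+…+n_J)!/(n_1!·…·n_J!))·(1/k)^{n_1+…+n_J}·g(n_J). Define G_m(g;a,n) = ∑_{l=1}^{m} C(m,l)·(l/k^l)·F_{m−l}(g; n−l−1, l+a). Then for every m with 1 ≤ m ≤ n−2 (and also for m = n−1 when g ≡ 1), G_m(g;a,n) = (1/k)·∑_{l=1}^{m} C(m,l)·(−1)^{l+1}·l·F_0(g; n−l−1, 1+a). -/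
open scoped BigOperators

noncomputable section

/-- `G_m(g;a,n)`. -/
noncomputable def Gsum (k : ℕ) (g : ℕ → ℝ) (a : ℤ) (n m : ℕ) : ℝ :=
  ∑ l ∈ Finset.Icc 1 m,
    (m.choose l : ℝ) * ((l : ℝ) / (k:ℝ) ^ l)
      * Fsum k g (m - l) (n - l - 1) (((l : ℤ) + a).toNat)

lemma Fterm_insertNth (k : ℕ) (g : ℕ → ℝ) (J : ℕ) (t : Fin (J+1)) (L c : ℕ) (hc : c ≤ 1)
    (hgt : (t:ℕ) < J ∨ ∀ i, g i = 1) (w : Fin J → ℕ) :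
    Fterm k g (J+1) L (t.insertNth c w) = (1/(k:ℝ))^c * Fterm k g J (L+c) w := by
  set v : Fin (J+1) → ℕ := t.insertNth c w with hv
  have hsum : ∑ i, v i = c + ∑ i, w i := by
    rw [Fin.sum_univ_succAbove v t]
    simp [hv]
  have hprod : ∏ i, ((v i).factorial : ℝ)
      = ∏ i, ((w i).factorial : ℝ) := by
    rw [Fin.prod_univ_succAbove (fun i => ((v i).factorial : ℝ)) t]
    interval_cases c <;> simp [hv]
  have hgarg : g (if h : 0 < J+1 then v ⟨J+1-1, by omega⟩ else 0)
      = g (if h : 0 < J then w ⟨J-1, by omega⟩ else 0) := by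
    rcases hgt with ht | hg1
    · have hJ : 0 < J := by omega
      rw [dif_pos (by omega : 0 < J+1), dif_pos hJ]
      congr 1
      have h1 : (⟨J+1-1, by omega⟩ : Fin (J+1)) = t.succAbove ⟨J-1, by omega⟩ := by
        rw [Fin.succAbove_of_le_castSucc]
        · ext; simp; omega
        · rw [Fin.le_def]; simp; omega
      rw [hv, h1, Fin.insertNth_apply_succAbove]
    · rw [hg1, hg1]
  unfold Fterm
  rw [hsum, hprod, hgarg, show L + (c + ∑ i, w i) = (L + c) + ∑ i, w i from by omega,
    pow_add]
  ring

/-- Equiv between `FIdx p J` and tuples of length `J+1` with `p`-th coordinate fixed to `c`. -/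
def insertEquiv (p J c : ℕ) (hpJ : p ≤ J) :
    FIdx p J ≃ {v : Fin (J+1) → ℕ //
      (∀ i : Fin (J+1), (i : ℕ) < p → 2 ≤ v i) ∧ v ⟨p, by omega⟩ = c} where
  toFun w := ⟨(⟨p, by omega⟩ : Fin (J+1)).insertNth c w.1, by
      constructor
      · intro i hi
        have hit : i ≠ ⟨p, by omega⟩ := by
          intro h; rw [h] at hi; simp at hi
        obtain ⟨j, hj⟩ := Fin.exists_succAbove_eq hit
        rw [← hj, Fin.insertNth_apply_succAbove]
        apply w.2
        have hle : (j : ℕ) ≤ (((⟨p, by omega⟩ : Fin (J+1)).succAbove j : Fin (J+1)) : ℕ) := by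
          unfold Fin.succAbove
          split <;> simp
        have hval : (((⟨p, by omega⟩ : Fin (J+1)).succAbove j : Fin (J+1)) : ℕ) = (i : ℕ) := by
          rw [hj]
        omega
      · simp, ⟩
  invFun v := ⟨(⟨p, by omega⟩ : Fin (J+1)).removeNth v.1, by
      intro j hj
      have h1 : (⟨p, by omega⟩ : Fin (J+1)).succAbove j = Fin.castSucc j := by
        apply Fin.succAbove_of_castSucc_lt
        rw [Fin.lt_def]; simpa using hj
      show 2 ≤ v.1 _
      exact v.2.1 _ (by rw [h1]; simpa using hj)⟩
  left_inv w := Subtype.ext (by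
    show Fin.removeNth (α := fun _ => ℕ) (⟨p, by omega⟩ : Fin (J+1))
        (Fin.insertNth (α := fun _ => ℕ) (⟨p, by omega⟩ : Fin (J+1)) c w.1) = w.1
    exact Fin.removeNth_insertNth _ _ _)
  right_inv v := Subtype.ext (by
    have := Fin.insertNth_self_removeNth (⟨p, by omega⟩ : Fin (J+1)) v.1
    rw [v.2.2] at this
    exact this)

lemma insertEquiv_val (p J c : ℕ) (hpJ : p ≤ J) (w : FIdx p J) :
    ((insertEquiv p J c hpJ w) : {v : Fin (J+1) → ℕ //
      (∀ i : Fin (J+1), (i : ℕ) < p → 2 ≤ v i) ∧ v ⟨p, by omega⟩ = c}).1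
      = (⟨p, by omega⟩ : Fin (J+1)).insertNth c w.1 := by rfl

lemma Fsum_split (k : ℕ) (g : ℕ → ℝ) (p J : ℕ) (hpJ : p ≤ J)
    (hgt : p < J ∨ ∀ i, g i = 1) (L : ℕ)
    (hsum : Summable (fun v : Fin (J+1) → ℕ => |Fterm k g (J+1) L v|)) :
    Fsum k g p (J+1) L
      = Fsum k g (p+1) (J+1) L + Fsum k g p J L + (1/(k:ℝ)) * Fsum k g p J (L+1) := by
  classical
  set t : Fin (J+1) := ⟨p, by omega⟩ with ht
  set f : (Fin (J+1) → ℕ) → ℝ := fun v => Fterm k g (J+1) L v with hf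
  have hfs : Summable f := hsum.of_abs
  set A : Set (Fin (J+1) → ℕ) := {v | ∀ i : Fin (J+1), (i:ℕ) < p → 2 ≤ v i} with hA
  set B : Set (Fin (J+1) → ℕ) := {v | ∀ i : Fin (J+1), (i:ℕ) < p+1 → 2 ≤ v i} with hB
  set C : ℕ → Set (Fin (J+1) → ℕ) :=
    fun c => {v | (∀ i : Fin (J+1), (i:ℕ) < p → 2 ≤ v i) ∧ v t = c} with hC
  have hmemA : ∀ v, v ∈ A ↔ (∀ i : Fin (J+1), (i:ℕ) < p → 2 ≤ v i) := fun v => Iff.rfl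
  have hmemB : ∀ v, v ∈ B ↔ (∀ i : Fin (J+1), (i:ℕ) < p+1 → 2 ≤ v i) := fun v => Iff.rfl
  have hmemC : ∀ c v, v ∈ C c ↔ ((∀ i : Fin (J+1), (i:ℕ) < p → 2 ≤ v i) ∧ v t = c) :=
    fun c v => Iff.rfl
  have hind : ∀ v, A.indicator f v
      = B.indicator f v + (C 0).indicator f v + (C 1).indicator f v := by
    intro v
    by_cases hvA : v ∈ A
    · rcases Nat.lt_or_ge (v t) 2 with hvt | hvt
      · have hvB : v ∉ B := by
          intro hvB
          have := (hmemB v).1 hvB t (by simp [ht])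
          omega
        have h01 : v t = 0 ∨ v t = 1 := by omega
        rcases h01 with h0 | h1
        · have hv0 : v ∈ C 0 := (hmemC 0 v).2 ⟨(hmemA v).1 hvA, h0⟩
          have hv1 : v ∉ C 1 := by
            intro hc; have := ((hmemC 1 v).1 hc).2; omega
          rw [Set.indicator_of_mem hvA, Set.indicator_of_notMem hvB,
            Set.indicator_of_mem hv0, Set.indicator_of_notMem hv1]
          ring
        · have hv1 : v ∈ C 1 := (hmemC 1 v).2 ⟨(hmemA v).1 hvA, h1⟩
          have hv0 : v ∉ C 0 := by
            intro hc; have := ((hmemC 0 v).1 hc).2; omega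
          rw [Set.indicator_of_mem hvA, Set.indicator_of_notMem hvB,
            Set.indicator_of_notMem hv0, Set.indicator_of_mem hv1]
          ring
      · have hvB : v ∈ B := by
          refine (hmemB v).2 (fun i hi => ?_)
          rcases Nat.lt_or_ge (i : ℕ) p with h | h
          · exact (hmemA v).1 hvA i h
          · have : i = t := Fin.ext (by simp [ht]; omega)
            rw [this]; omega
        have hv0 : v ∉ C 0 := by intro hc; have := ((hmemC 0 v).1 hc).2; omega
        have hv1 : v ∉ C 1 := by intro hc; have := ((hmemC 1 v).1 hc).2; omega
        rw [Set.indicator_of_mem hvA, Set.indicator_of_mem hvB,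
          Set.indicator_of_notMem hv0, Set.indicator_of_notMem hv1]
        ring
    · have hvB : v ∉ B := fun hvB => hvA ((hmemA v).2 (fun i hi => (hmemB v).1 hvB i (by omega)))
      have hv0 : v ∉ C 0 := fun hc => hvA ((hmemA v).2 ((hmemC 0 v).1 hc).1)
      have hv1 : v ∉ C 1 := fun hc => hvA ((hmemA v).2 ((hmemC 1 v).1 hc).1)
      rw [Set.indicator_of_notMem hvA, Set.indicator_of_notMem hvB,
        Set.indicator_of_notMem hv0, Set.indicator_of_notMem hv1]
      ring
  have hFA : Fsum k g p (J+1) L = ∑' v, A.indicator f v := by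
    rw [← tsum_subtype]
    rfl
  have hFB : (∑' v, B.indicator f v) = Fsum k g (p+1) (J+1) L := by
    rw [← tsum_subtype]
    rfl
  have hFC : ∀ c : ℕ, c ≤ 1 →
      (∑' v, (C c).indicator f v) = (1/(k:ℝ))^c * Fsum k g p J (L + c) := by
    intro c hc
    rw [← tsum_subtype]
    have he : ∀ w : FIdx p J, f ((insertEquiv p J c hpJ w) : Fin (J+1) → ℕ)
        = (1/(k:ℝ))^c * Fterm k g J (L+c) w.1 := by
      intro w
      rw [hf]
      show Fterm k g (J+1) L ((insertEquiv p J c hpJ w : _)) = _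
      rw [insertEquiv_val p J c hpJ w]
      exact Fterm_insertNth k g J t L c hc (by rcases hgt with h | h; exact Or.inl (by simp [ht]; omega); exact Or.inr h) w.1
    calc (∑' v : C c, f v)
        = ∑' w : FIdx p J, f ((insertEquiv p J c hpJ w : _)) := ((insertEquiv p J c hpJ).tsum_eq _).symm
      _ = ∑' w : FIdx p J, (1/(k:ℝ))^c * Fterm k g J (L+c) w.1 := tsum_congr he
      _ = (1/(k:ℝ))^c * Fsum k g p J (L + c) := by rw [tsum_mul_left]; rfl
  rw [hFA, tsum_congr hind, Summable.tsum_add ((hfs.indicator B).add (hfs.indicator (C 0))) (hfs.indicator (C 1)),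
    Summable.tsum_add (hfs.indicator B) (hfs.indicator (C 0)), hFB, hFC 0 (by norm_num), hFC 1 (by norm_num)]
  simp

noncomputable def Usum (k : ℕ) (g : ℕ → ℝ) (s J L : ℕ) : ℝ :=
  ∑ j ∈ Finset.range (s+1), (s.choose j : ℝ) * (1/(k:ℝ))^j * Fsum k g 0 J (L+j)

lemma Usum_succ (k : ℕ) (g : ℕ → ℝ) (s J L : ℕ) :
    Usum k g (s+1) J L = Usum k g s J L + (1/(k:ℝ)) * Usum k g s J (L+1) := by
  unfold Usum
  rw [Finset.sum_range_succ' (fun j => ((s+1).choose j : ℝ) * (1/(k:ℝ))^j * Fsum k g 0 J (L+j)) (s+1)]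
  have hsplit : ∀ j, (((s+1).choose (j+1) : ℝ) * (1/(k:ℝ))^(j+1) * Fsum k g 0 J (L+(j+1)))
      = (s.choose j : ℝ) * (1/(k:ℝ))^(j+1) * Fsum k g 0 J (L+(j+1))
        + (s.choose (j+1) : ℝ) * (1/(k:ℝ))^(j+1) * Fsum k g 0 J (L+(j+1)) := by
    intro j
    have : ((s+1).choose (j+1) : ℝ) = (s.choose j : ℝ) + (s.choose (j+1) : ℝ) := by
      exact_mod_cast Nat.choose_succ_succ s j
    rw [this]; ring
  rw [Finset.sum_congr rfl (fun j _ => hsplit j), Finset.sum_add_distrib]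
  have h1 : ∑ j ∈ Finset.range (s+1), (s.choose j : ℝ) * (1/(k:ℝ))^(j+1) * Fsum k g 0 J (L+(j+1))
      = (1/(k:ℝ)) * ∑ j ∈ Finset.range (s+1), (s.choose j : ℝ) * (1/(k:ℝ))^j * Fsum k g 0 J (L+1+j) := by
    rw [Finset.mul_sum]
    refine Finset.sum_congr rfl (fun j _ => ?_)
    rw [show L + 1 + j = L + (j+1) from by omega, pow_succ]
    ring
  have h2 : ∑ j ∈ Finset.range (s+1), (s.choose (j+1) : ℝ) * (1/(k:ℝ))^(j+1) * Fsum k g 0 J (L+(j+1))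
        + ((s+1).choose 0 : ℝ) * (1/(k:ℝ))^0 * Fsum k g 0 J (L+0)
      = ∑ j ∈ Finset.range (s+1), (s.choose j : ℝ) * (1/(k:ℝ))^j * Fsum k g 0 J (L+j) := by
    rw [Finset.sum_range_succ' (fun j => (s.choose j : ℝ) * (1/(k:ℝ))^j * Fsum k g 0 J (L+j)) s]
    rw [Finset.sum_range_succ (fun j => (s.choose (j+1) : ℝ) * (1/(k:ℝ))^(j+1) * Fsum k g 0 J (L+(j+1))) s]
    simp [Nat.choose_succ_self]
  rw [h1]
  linarith [h2]

lemma Fsum_closed (k : ℕ) (g : ℕ → ℝ) :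
    ∀ p J L : ℕ, p ≤ J → (p < J ∨ ∀ i, g i = 1) →
    (∀ J' L' : ℕ, J' ≤ J → Summable (fun v : Fin J' → ℕ => |Fterm k g J' L' v|)) →
    Fsum k g p J L
      = ∑ s ∈ Finset.range (p+1), (-1:ℝ)^s * (p.choose s : ℝ) * Usum k g s (J-s) L := by
  intro p
  induction p with
  | zero =>
    intro J L _ _ _
    simp [Usum]
  | succ p ih =>
    intro J L hpJ hgt hsum
    obtain ⟨J', rfl⟩ : ∃ J'', J = J'' + 1 := ⟨J - 1, by omega⟩
    have hrec := Fsum_split k g p J' (by omega)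
      (by rcases hgt with h | h; exact Or.inl (by omega); exact Or.inr h) L
      (hsum (J'+1) L (le_refl _))
    have hJ'sum : ∀ J'' L', J'' ≤ J' → Summable (fun v : Fin J'' → ℕ => |Fterm k g J'' L' v|) :=
      fun J'' L' h => hsum J'' L' (by omega)
    have e1 := ih (J'+1) L (by omega) (Or.inl (by omega)) hsum
    have e2 := ih J' L (by omega)
      (by rcases hgt with h | h; exact Or.inl (by omega); exact Or.inr h) hJ'sum
    have e3 := ih J' (L+1) (by omega)
      (by rcases hgt with h | h; exact Or.inl (by omega); exact Or.inr h) hJ'sum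
    have hmain : Fsum k g (p+1) (J'+1) L
        = Fsum k g p (J'+1) L - Fsum k g p J' L - (1/(k:ℝ)) * Fsum k g p J' (L+1) := by
      rw [hrec]; ring
    rw [hmain, e1, e2, e3]
    have hBC : (∑ s ∈ Finset.range (p+1), (-1:ℝ)^s * (p.choose s : ℝ) * Usum k g s (J'-s) L)
          + (1/(k:ℝ)) * ∑ s ∈ Finset.range (p+1), (-1:ℝ)^s * (p.choose s : ℝ) * Usum k g s (J'-s) (L+1)
        = ∑ s ∈ Finset.range (p+1), (-1:ℝ)^s * (p.choose s : ℝ) * Usum k g (s+1) (J'-s) L := by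
      rw [Finset.mul_sum, ← Finset.sum_add_distrib]
      refine Finset.sum_congr rfl fun s _ => ?_
      rw [Usum_succ]; ring
    have hA : ∑ s ∈ Finset.range (p+1), (-1:ℝ)^s * (p.choose s : ℝ) * Usum k g s (J'+1-s) L
        = (∑ s ∈ Finset.range (p+1), (-1:ℝ)^(s+1) * (p.choose (s+1) : ℝ) * Usum k g (s+1) (J'-s) L)
          + Usum k g 0 (J'+1) L := by
      rw [Finset.sum_range_succ' (fun s => (-1:ℝ)^s * (p.choose s : ℝ) * Usum k g s (J'+1-s) L) p]
      rw [Finset.sum_range_succ (fun s => (-1:ℝ)^(s+1) * (p.choose (s+1) : ℝ) * Usum k g (s+1) (J'-s) L) p]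
      simp [Nat.succ_sub_succ, Nat.choose_succ_self]
    have hRHS : ∑ s ∈ Finset.range (p+1+1), (-1:ℝ)^s * ((p+1).choose s : ℝ) * Usum k g s (J'+1-s) L
        = (∑ s ∈ Finset.range (p+1), (-1:ℝ)^(s+1) * (p.choose (s+1) : ℝ) * Usum k g (s+1) (J'-s) L)
          - (∑ s ∈ Finset.range (p+1), (-1:ℝ)^s * (p.choose s : ℝ) * Usum k g (s+1) (J'-s) L)
          + Usum k g 0 (J'+1) L := by
      rw [Finset.sum_range_succ' (fun s => (-1:ℝ)^s * ((p+1).choose s : ℝ) * Usum k g s (J'+1-s) L) (p+1)]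
      rw [sub_eq_add_neg, ← Finset.sum_neg_distrib, ← Finset.sum_add_distrib]
      simp only [Nat.succ_sub_succ]
      congr 1
      · refine Finset.sum_congr rfl fun s _ => ?_
        have hc : ((p+1).choose (s+1) : ℝ) = (p.choose s : ℝ) + (p.choose (s+1) : ℝ) := by
          exact_mod_cast Nat.choose_succ_succ p s
        rw [hc, pow_succ]; ring
      · simp
    rw [hA, hRHS]
    linarith [hBC]

lemma alt_sum (w : ℕ) (hw : 1 ≤ w) :
    ∑ l ∈ Finset.Icc 1 w, (-1:ℝ)^l * (l:ℝ) * (w.choose l : ℝ)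
      = if w = 1 then -1 else 0 := by
  have hmul : ∀ l ∈ Finset.Icc 1 w, (-1:ℝ)^l * (l:ℝ) * (w.choose l : ℝ)
      = (-1:ℝ)^l * (w : ℝ) * ((w-1).choose (l-1) : ℝ) := by
    intro l hl
    rw [Finset.mem_Icc] at hl
    have h := Nat.add_one_mul_choose_eq (w-1) (l-1)
    rw [show w - 1 + 1 = w from by omega,
      show l - 1 + 1 = l from by omega] at h
    have hr : (w : ℝ) * ((w-1).choose (l-1) : ℝ) = (w.choose l : ℝ) * (l : ℝ) := by
      exact_mod_cast h
    calc (-1:ℝ)^l * (l:ℝ) * (w.choose l : ℝ) = (-1:ℝ)^l * ((w.choose l : ℝ) * (l:ℝ)) := by ring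
      _ = (-1:ℝ)^l * ((w : ℝ) * ((w-1).choose (l-1) : ℝ)) := by rw [← hr]
      _ = (-1:ℝ)^l * (w : ℝ) * ((w-1).choose (l-1) : ℝ) := by ring
  rw [Finset.sum_congr rfl hmul, ← Finset.Ico_add_one_right_eq_Icc, Finset.sum_Ico_eq_sum_range,
    show w + 1 - 1 = w from by omega]
  by_cases h1 : w = 1
  · subst h1; norm_num
  · rw [if_neg h1]
    have h := Int.alternating_sum_range_choose_of_ne (show w - 1 ≠ 0 from by omega)
    rw [show w - 1 + 1 = w from by omega] at h
    have h' : ∑ i ∈ Finset.range w, (-1:ℝ)^i * ((w-1).choose i : ℝ) = 0 := by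
      exact_mod_cast h
    calc ∑ i ∈ Finset.range w, (-1:ℝ)^(1+i) * (w:ℝ) * ((w-1).choose (1+i-1) : ℝ)
        = ∑ i ∈ Finset.range w, (-(w:ℝ)) * ((-1:ℝ)^i * ((w-1).choose i : ℝ)) := by
          refine Finset.sum_congr rfl fun i _ => ?_
          rw [show 1 + i - 1 = i from by omega, pow_add]
          ring
      _ = (-(w:ℝ)) * ∑ i ∈ Finset.range w, (-1:ℝ)^i * ((w-1).choose i : ℝ) := by
          rw [Finset.mul_sum]
      _ = 0 := by rw [h']; ring

noncomputable def Tterm (k : ℕ) (g : ℕ → ℝ) (a : ℤ) (n m l u w : ℕ) : ℝ :=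
  (m.choose l : ℝ) * (l:ℝ) * ((m-l).choose (u-l) : ℝ) * ((u-l).choose (w-l) : ℝ)
    * (-1:ℝ)^(u-l) * (1/(k:ℝ))^w * Fsum k g 0 (n-u-1) ((1+a).toNat + (w-1))

set_option maxHeartbeats 1000000 in
/-- the closed form for `G_m(g;a,n)`. -/
theorem stmt_10 (n k : ℕ) (hn : 3 ≤ n) (hk : n ≤ k) (a : ℤ) (ha : -1 ≤ a)
    (g : ℕ → ℝ)
    (hg : ∀ l L : ℕ, 1 ≤ l → l ≤ n - 2 →
      Summable (fun v : FIdx 0 (n - l - 1) => |Fterm k g (n - l - 1) L v.1|))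
    (m : ℕ) (hm : (1 ≤ m ∧ m ≤ n - 2) ∨ (m = n - 1 ∧ ∀ i, g i = 1)) :
    Gsum k g a n m
      = (1 / (k:ℝ)) * ∑ l ∈ Finset.Icc 1 m,
          (m.choose l : ℝ) * (-1) ^ (l + 1) * (l : ℝ)
            * Fsum k g 0 (n - l - 1) ((1 + a).toNat) := by
  classical
  obtain ⟨hm1, hmn⟩ : 1 ≤ m ∧ m ≤ n - 1 := by
    rcases hm with ⟨h1, h2⟩ | ⟨h1, _⟩
    · exact ⟨h1, by omega⟩
    · exact ⟨by omega, by omega⟩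
  -- summability over the full tuple spaces
  have hS : ∀ J L : ℕ, J ≤ n - 2 → Summable (fun v : Fin J → ℕ => |Fterm k g J L v|) := by
    intro J L hJ
    rcases Nat.eq_zero_or_pos J with rfl | hJ1
    · haveI : Finite (Fin 0 → ℕ) := Finite.of_subsingleton
      exact Summable.of_finite
    · have hgJ := hg (n - 1 - J) L (by omega) (by omega)
      have hJeq : n - (n - 1 - J) - 1 = J := by omega
      rw [hJeq] at hgJ
      exact (Equiv.summable_iff
        (⟨fun v => ⟨v, fun i hi => by omega⟩, fun w => w.1, fun v => rfl, fun w => rfl⟩ :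
          (Fin J → ℕ) ≃ FIdx 0 J)).mpr hgJ
  -- the closed form for each F_{m-l}
  have hkey : ∀ l, 1 ≤ l → l ≤ m →
      Fsum k g (m-l) (n-l-1) (((l:ℤ)+a).toNat)
        = ∑ s ∈ Finset.range ((m-l)+1),
            (-1:ℝ)^s * ((m-l).choose s : ℝ) * Usum k g s ((n-l-1)-s) (((l:ℤ)+a).toNat) := by
    intro l h1 h2
    apply Fsum_closed
    · omega
    · rcases hm with ⟨hma, hmb⟩ | ⟨hma, hgb⟩
      · exact Or.inl (by omega)
      · exact Or.inr hgb
    · intro J' L' hJ'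
      exact hS J' L' (by omega)
  have hre : ∀ (l N : ℕ), l ≤ N → ∀ f : ℕ → ℝ,
      ∑ u ∈ Finset.Icc l N, f (u - l) = ∑ s ∈ Finset.range (N - l + 1), f s := by
    intro l N h f
    rw [← Finset.Ico_add_one_right_eq_Icc, Finset.sum_Ico_eq_sum_range,
      show N + 1 - l = N - l + 1 from by omega]
    exact Finset.sum_congr rfl (fun i _ => by rw [show l + i - l = i from by omega])
  -- Step 1 : rewrite each summand of G as a double sum of Tterm
  have hstep1 : ∀ l ∈ Finset.Icc 1 m,
      (m.choose l : ℝ) * ((l : ℝ) / (k:ℝ) ^ l) * Fsum k g (m - l) (n - l - 1) (((l : ℤ) + a).toNat)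
        = ∑ u ∈ Finset.Icc l m, ∑ w ∈ Finset.Icc l u, Tterm k g a n m l u w := by
    intro l hl
    obtain ⟨hl1, hlm⟩ := Finset.mem_Icc.mp hl
    calc (m.choose l : ℝ) * ((l : ℝ) / (k:ℝ) ^ l) * Fsum k g (m - l) (n - l - 1) (((l : ℤ) + a).toNat)
        = ∑ s ∈ Finset.range ((m-l)+1), (m.choose l : ℝ) * ((l : ℝ) / (k:ℝ) ^ l)
            * ((-1:ℝ)^s * ((m-l).choose s : ℝ) * Usum k g s ((n-l-1)-s) (((l:ℤ)+a).toNat)) := by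
          rw [hkey l hl1 hlm, Finset.mul_sum]
      _ = ∑ u ∈ Finset.Icc l m, (m.choose l : ℝ) * ((l : ℝ) / (k:ℝ) ^ l)
            * ((-1:ℝ)^(u-l) * ((m-l).choose (u-l) : ℝ)
              * Usum k g (u-l) ((n-l-1)-(u-l)) (((l:ℤ)+a).toNat)) := by
          rw [hre l m hlm (fun s => (m.choose l : ℝ) * ((l : ℝ) / (k:ℝ) ^ l)
            * ((-1:ℝ)^s * ((m-l).choose s : ℝ) * Usum k g s ((n-l-1)-s) (((l:ℤ)+a).toNat)))]
      _ = ∑ u ∈ Finset.Icc l m, ∑ w ∈ Finset.Icc l u, Tterm k g a n m l u w := by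
          refine Finset.sum_congr rfl fun u hu => ?_
          obtain ⟨hlu, hum⟩ := Finset.mem_Icc.mp hu
          calc (m.choose l : ℝ) * ((l : ℝ) / (k:ℝ) ^ l)
                * ((-1:ℝ)^(u-l) * ((m-l).choose (u-l) : ℝ)
                  * Usum k g (u-l) ((n-l-1)-(u-l)) (((l:ℤ)+a).toNat))
              = ∑ j ∈ Finset.range ((u-l)+1), (m.choose l : ℝ) * ((l : ℝ) / (k:ℝ) ^ l)
                  * ((-1:ℝ)^(u-l) * ((m-l).choose (u-l) : ℝ)
                    * (((u-l).choose j : ℝ) * (1/(k:ℝ))^j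
                      * Fsum k g 0 ((n-l-1)-(u-l)) ((((l:ℤ)+a).toNat)+j))) := by
                simp only [Usum, Finset.mul_sum]
            _ = ∑ w ∈ Finset.Icc l u, (m.choose l : ℝ) * ((l : ℝ) / (k:ℝ) ^ l)
                  * ((-1:ℝ)^(u-l) * ((m-l).choose (u-l) : ℝ)
                    * (((u-l).choose (w-l) : ℝ) * (1/(k:ℝ))^(w-l)
                      * Fsum k g 0 ((n-l-1)-(u-l)) ((((l:ℤ)+a).toNat)+(w-l)))) := by
                rw [hre l u hlu (fun j => (m.choose l : ℝ) * ((l : ℝ) / (k:ℝ) ^ l)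
                  * ((-1:ℝ)^(u-l) * ((m-l).choose (u-l) : ℝ)
                    * (((u-l).choose j : ℝ) * (1/(k:ℝ))^j
                      * Fsum k g 0 ((n-l-1)-(u-l)) ((((l:ℤ)+a).toNat)+j))))]
            _ = ∑ w ∈ Finset.Icc l u, Tterm k g a n m l u w := by
                refine Finset.sum_congr rfl fun w hw => ?_
                obtain ⟨hlw, hwu⟩ := Finset.mem_Icc.mp hw
                have harg1 : (n-l-1)-(u-l) = n-u-1 := by omega
                have harg2 : (((l:ℤ)+a).toNat)+(w-l) = (1+a).toNat + (w-1) := by omega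
                have hdiv : (l:ℝ)/(k:ℝ)^l = (l:ℝ) * (1/(k:ℝ))^l := by
                  rw [div_eq_mul_inv, one_div, inv_pow]
                have hpow : (1/(k:ℝ))^l * (1/(k:ℝ))^(w-l) = (1/(k:ℝ))^w := by
                  rw [← pow_add, show l+(w-l) = w from by omega]
                rw [harg1, harg2, hdiv, Tterm]
                linear_combination ((m.choose l : ℝ) * (l:ℝ) * ((m-l).choose (u-l) : ℝ)
                  * ((u-l).choose (w-l) : ℝ) * (-1:ℝ)^(u-l)
                  * Fsum k g 0 (n-u-1) ((1+a).toNat + (w-1))) * hpow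
  -- inner alternating sum collapse
  have hinner : ∀ u w : ℕ, u ≤ m → 1 ≤ w → w ≤ u →
      ∑ l ∈ Finset.Icc 1 w, Tterm k g a n m l u w
        = (if w = 1 then (-1:ℝ) else 0) * ((m.choose u : ℝ) * (u.choose w : ℝ) * (-1:ℝ)^u
            * (1/(k:ℝ))^w * Fsum k g 0 (n-u-1) ((1+a).toNat + (w-1))) := by
    intro u w hum hw1 hwu
    have hterm : ∀ l ∈ Finset.Icc 1 w, Tterm k g a n m l u w
        = ((-1:ℝ)^l * (l:ℝ) * (w.choose l : ℝ)) * ((m.choose u : ℝ) * (u.choose w : ℝ)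
            * (-1:ℝ)^u * (1/(k:ℝ))^w * Fsum k g 0 (n-u-1) ((1+a).toNat + (w-1))) := by
      intro l hl
      obtain ⟨hl1, hlw⟩ := Finset.mem_Icc.mp hl
      have hc1 : m.choose u * u.choose l = m.choose l * (m-l).choose (u-l) :=
        Nat.choose_mul (n := m) (by omega)
      have hc2 : u.choose w * w.choose l = u.choose l * (u-l).choose (w-l) :=
        Nat.choose_mul (n := u) hlw
      have hC : m.choose l * ((m-l).choose (u-l)) * ((u-l).choose (w-l))
          = m.choose u * u.choose w * w.choose l := by
        calc m.choose l * ((m-l).choose (u-l)) * ((u-l).choose (w-l))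
            = (m.choose u * u.choose l) * ((u-l).choose (w-l)) := by rw [hc1]
          _ = m.choose u * (u.choose l * (u-l).choose (w-l)) := by ring
          _ = m.choose u * (u.choose w * w.choose l) := by rw [← hc2]
          _ = m.choose u * u.choose w * w.choose l := by ring
      have hCr : (m.choose l : ℝ) * ((m-l).choose (u-l) : ℝ) * ((u-l).choose (w-l) : ℝ)
          = (m.choose u : ℝ) * (u.choose w : ℝ) * (w.choose l : ℝ) := by exact_mod_cast hC
      have hsign : (-1:ℝ)^u * (-1:ℝ)^l = (-1:ℝ)^(u-l) := by
        rw [← pow_add, show u + l = (u-l) + 2*l from by omega, pow_add, pow_mul]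
        norm_num
      rw [Tterm]
      calc (m.choose l : ℝ) * (l:ℝ) * ((m-l).choose (u-l) : ℝ) * ((u-l).choose (w-l) : ℝ)
            * (-1:ℝ)^(u-l) * (1/(k:ℝ))^w * Fsum k g 0 (n-u-1) ((1+a).toNat + (w-1))
          = ((m.choose l : ℝ) * ((m-l).choose (u-l) : ℝ) * ((u-l).choose (w-l) : ℝ))
            * ((l:ℝ) * (-1:ℝ)^(u-l) * (1/(k:ℝ))^w
              * Fsum k g 0 (n-u-1) ((1+a).toNat + (w-1))) := by ring
        _ = ((m.choose u : ℝ) * (u.choose w : ℝ) * (w.choose l : ℝ))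
            * ((l:ℝ) * (-1:ℝ)^(u-l) * (1/(k:ℝ))^w
              * Fsum k g 0 (n-u-1) ((1+a).toNat + (w-1))) := by rw [hCr]
        _ = ((-1:ℝ)^l * (l:ℝ) * (w.choose l : ℝ)) * ((m.choose u : ℝ) * (u.choose w : ℝ)
            * (-1:ℝ)^u * (1/(k:ℝ))^w * Fsum k g 0 (n-u-1) ((1+a).toNat + (w-1))) := by
            rw [← hsign]; ring
    rw [Finset.sum_congr rfl hterm, ← Finset.sum_mul, alt_sum w hw1]
  -- final assembly
  calc Gsum k g a n m
      = ∑ l ∈ Finset.Icc 1 m, ∑ u ∈ Finset.Icc l m, ∑ w ∈ Finset.Icc l u,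
          Tterm k g a n m l u w := by
        simp only [Gsum]
        exact Finset.sum_congr rfl hstep1
    _ = ∑ u ∈ Finset.Icc 1 m, ∑ l ∈ Finset.Icc 1 u, ∑ w ∈ Finset.Icc l u,
          Tterm k g a n m l u w :=
        Finset.sum_comm' (fun l u => by simp only [Finset.mem_Icc]; omega)
    _ = ∑ u ∈ Finset.Icc 1 m, ∑ w ∈ Finset.Icc 1 u, ∑ l ∈ Finset.Icc 1 w,
          Tterm k g a n m l u w :=
        Finset.sum_congr rfl (fun u hu =>
          Finset.sum_comm' (fun l w => by simp only [Finset.mem_Icc]; omega))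
    _ = ∑ u ∈ Finset.Icc 1 m, (1/(k:ℝ)) * ((m.choose u : ℝ) * (-1:ℝ)^(u+1) * (u:ℝ)
          * Fsum k g 0 (n-u-1) ((1+a).toNat)) := by
        refine Finset.sum_congr rfl fun u hu => ?_
        obtain ⟨hu1, hum⟩ := Finset.mem_Icc.mp hu
        rw [Finset.sum_congr rfl (fun w hw => hinner u w hum
          (Finset.mem_Icc.mp hw).1 (Finset.mem_Icc.mp hw).2)]
        rw [Finset.sum_eq_single_of_mem 1 (Finset.mem_Icc.mpr ⟨le_refl 1, hu1⟩)
          (fun w _ hne => by rw [if_neg hne, zero_mul])]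
        rw [if_pos rfl]
        simp only [Nat.choose_one_right, pow_one]
        rw [show (1:ℕ) - 1 = 0 from rfl, add_zero, pow_succ]
        ring
    _ = (1 / (k:ℝ)) * ∑ l ∈ Finset.Icc 1 m, (m.choose l : ℝ) * (-1:ℝ)^(l+1) * (l:ℝ)
          * Fsum k g 0 (n-l-1) ((1+a).toNat) := by
        rw [Finset.mul_sum]
end
end

section
/- Let J ≥ 1 be an integer, let z be a real with 0 ≤ z < 1/J, and let L ∈ ℕ. Then ∑_{n_1≥0,…,n_J≥0} ((L+n_1+…+n_J)!/(n_1!·…·n_J!))·z^{n_1+…+n_J}·(n_J − 1) = L!·((J+L+1)z − 1)/(1−Jz)^{L+2}, the family being absolutely summable. -/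
open scoped BigOperators
open Finset

private lemma multinomial_real' {α : Type*} (s : Finset α) (f : α → ℕ) :
    (Nat.multinomial s f : ℝ) = ((∑ i ∈ s, f i).factorial : ℝ) / ∏ i ∈ s, ((f i).factorial : ℝ) := by
  have h := Nat.multinomial_spec s f
  have hne : (∏ i ∈ s, ((f i).factorial : ℝ)) ≠ 0 := by positivity
  rw [eq_div_iff hne, mul_comm]
  exact_mod_cast congrArg (Nat.cast (R := ℝ)) h

private lemma M1' (J n : ℕ) :
    ∑ k ∈ piAntidiag (univ : Finset (Fin J)) n, (Nat.multinomial univ k : ℝ) = (J : ℝ) ^ n := by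
  have h := Finset.sum_pow_eq_sum_piAntidiag (univ : Finset (Fin J)) (fun _ => (1 : ℝ)) n
  simpa using h.symm

private lemma M2' (J : ℕ) (j0 : Fin J) (n : ℕ) :
    ∑ k ∈ piAntidiag (univ : Finset (Fin J)) n, (Nat.multinomial univ k : ℝ) * (k j0 : ℝ)
      = (n : ℝ) * (J : ℝ) ^ (n - 1) := by
  classical
  cases n with
  | zero => simp
  | succ m =>
    have hfilter : ∑ k ∈ (piAntidiag (univ : Finset (Fin J)) (m+1)).filter (fun k => k j0 ≠ 0),
        (Nat.multinomial univ k : ℝ) * (k j0 : ℝ)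
        = ∑ k ∈ piAntidiag (univ : Finset (Fin J)) (m+1),
        (Nat.multinomial univ k : ℝ) * (k j0 : ℝ) := by
      apply Finset.sum_filter_of_ne
      intro k _ hk h0
      apply hk
      rw [h0]; simp
    rw [← hfilter]
    have step : ∑ k ∈ (piAntidiag (univ : Finset (Fin J)) (m+1)).filter (fun k => k j0 ≠ 0),
        (Nat.multinomial univ k : ℝ) * (k j0 : ℝ)
        = ∑ k ∈ piAntidiag (univ : Finset (Fin J)) m,
          ((m:ℝ)+1) * (Nat.multinomial univ k : ℝ) := by
      apply Finset.sum_nbij' (fun k => Function.update k j0 (k j0 - 1))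
        (fun k => Function.update k j0 (k j0 + 1))
      · intro k hk
        simp only [mem_filter, mem_piAntidiag] at hk
        obtain ⟨⟨hsum, -⟩, hne⟩ := hk
        rw [mem_piAntidiag]
        constructor
        · rw [Finset.sum_update_of_mem (mem_univ j0), Finset.sdiff_singleton_eq_erase]
          rw [← Finset.add_sum_erase _ k (mem_univ j0)] at hsum
          omega
        · intro i _; exact mem_univ i
      · intro k hk
        rw [mem_piAntidiag] at hk
        obtain ⟨hsum, -⟩ := hk
        simp only [mem_filter, mem_piAntidiag]
        refine ⟨⟨?_, fun i _ => mem_univ i⟩, by simp⟩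
        rw [Finset.sum_update_of_mem (mem_univ j0), Finset.sdiff_singleton_eq_erase]
        rw [← Finset.add_sum_erase _ k (mem_univ j0)] at hsum
        omega
      · intro k hk
        simp only [mem_filter] at hk
        funext i
        rcases eq_or_ne i j0 with rfl | hi
        · simp [Function.update_self]
          omega
        · simp [Function.update_of_ne hi]
      · intro k _
        funext i
        rcases eq_or_ne i j0 with rfl | hi
        · simp [Function.update_self]
        · simp [Function.update_of_ne hi]
      · intro k hk
        simp only [mem_filter, mem_piAntidiag] at hk
        obtain ⟨⟨hsum, -⟩, hne⟩ := hk
        obtain ⟨c, hc⟩ : ∃ c, k j0 = c + 1 := ⟨k j0 - 1, by omega⟩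
        rw [multinomial_real', multinomial_real']
        have hsum2 : ∑ i, Function.update k j0 (k j0 - 1) i = m := by
          rw [Finset.sum_update_of_mem (mem_univ j0), Finset.sdiff_singleton_eq_erase]
          rw [← Finset.add_sum_erase _ k (mem_univ j0)] at hsum
          omega
        rw [hsum2, hsum]
        have hprod : ∏ i, ((k i).factorial : ℝ)
            = ((k j0).factorial : ℝ) * ∏ i ∈ univ.erase j0, ((k i).factorial : ℝ) :=
          (Finset.mul_prod_erase _ _ (mem_univ j0)).symm
        have hprod2 : ∏ i, ((Function.update k j0 (k j0 - 1) i).factorial : ℝ)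
            = (((k j0 - 1)).factorial : ℝ)
              * ∏ i ∈ univ.erase j0, ((k i).factorial : ℝ) := by
          rw [← Finset.mul_prod_erase _ _ (mem_univ j0), Function.update_self]
          congr 1
          apply Finset.prod_congr rfl
          intro i hi
          rw [Function.update_of_ne (Finset.ne_of_mem_erase hi)]
        rw [hprod, hprod2, hc]
        simp only [Nat.add_sub_cancel, Nat.factorial_succ (c), Nat.factorial_succ m]
        have h1 : ((c.factorial : ℝ)) ≠ 0 := by positivity
        have h2 : ((m.factorial : ℝ)) ≠ 0 := by positivity
        have h3 : (∏ i ∈ univ.erase j0, ((k i).factorial : ℝ)) ≠ 0 := by positivity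
        push_cast
        field_simp
    rw [step, ← Finset.mul_sum, M1']
    push_cast
    simp

private lemma fiber_reduce' {J : ℕ} (F : (Fin J → ℕ) → ℝ) (hF : ∀ v, 0 ≤ F v)
    (hs : Summable (fun n => ∑ v ∈ Finset.piAntidiag (Finset.univ : Finset (Fin J)) n, F v)) :
    Summable F ∧ ∑' v, F v = ∑' n, ∑ v ∈ Finset.piAntidiag Finset.univ n, F v := by
  classical
  let e : (Σ n : ℕ, (piAntidiag (univ : Finset (Fin J)) n : Finset (Fin J → ℕ))) ≃ (Fin J → ℕ) :=
  { toFun := fun p => p.2.1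
    invFun := fun v => ⟨∑ i, v i, ⟨v, by simp [mem_piAntidiag]⟩⟩
    left_inv := by
      rintro ⟨n, v, hv⟩
      have h1 : ∑ i, v i = n := (mem_piAntidiag.mp hv).1
      subst h1
      rfl
    right_inv := fun v => rfl }
  have inner : ∀ n : ℕ, ∑' (c : (piAntidiag (univ : Finset (Fin J)) n : Finset (Fin J → ℕ))),
      F c = ∑ v ∈ piAntidiag (univ : Finset (Fin J)) n, F v := by
    intro n
    rw [tsum_fintype, Finset.sum_coe_sort]
  have hsig : Summable (F ∘ e) := by
    rw [show (F ∘ e) = fun p : (Σ n : ℕ, (piAntidiag (univ : Finset (Fin J)) n :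
      Finset (Fin J → ℕ))) => F p.2.1 from rfl]
    rw [summable_sigma_of_nonneg (fun p => hF _)]
    constructor
    · exact fun n => (hasSum_fintype _).summable
    · have : (fun n : ℕ =>
          ∑' (c : (piAntidiag (univ : Finset (Fin J)) n : Finset (Fin J → ℕ))), F c)
          = fun n => ∑ v ∈ piAntidiag (univ : Finset (Fin J)) n, F v := funext inner
      exact this ▸ hs
  have hsF : Summable F := e.summable_iff.mp hsig
  refine ⟨hsF, ?_⟩
  rw [← e.tsum_eq]
  rw [show (fun p : (Σ n : ℕ, (piAntidiag (univ : Finset (Fin J)) n : Finset (Fin J → ℕ))) =>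
    F (e p)) = F ∘ e from rfl, Summable.tsum_sigma hsig]
  exact tsum_congr inner

private lemma oneD (L : ℕ) {q : ℝ} (h0 : 0 ≤ q) (h1 : q < 1) :
    HasSum (fun n : ℕ => ((L + n).factorial : ℝ) / n.factorial * q ^ n)
      ((L.factorial : ℝ) / (1 - q) ^ (L + 1)) := by
  have hq : ‖q‖ < 1 := by rwa [Real.norm_eq_abs, abs_of_nonneg h0]
  have h := (hasSum_choose_mul_geometric_of_norm_lt_one (𝕜 := ℝ) L hq).mul_left
    (L.factorial : ℝ)
  have e1 : (fun n : ℕ => (L.factorial : ℝ) * (((n + L).choose L : ℝ) * q ^ n))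
      = fun n : ℕ => ((L + n).factorial : ℝ) / n.factorial * q ^ n := by
    funext n
    have key : (L + n).factorial = (n + L).choose L * L.factorial * n.factorial := by
      have := Nat.choose_mul_factorial_mul_factorial (Nat.le_add_left L n)
      simpa [Nat.add_sub_cancel, Nat.add_comm] using this.symm
    have hn : (n.factorial : ℝ) ≠ 0 := by positivity
    field_simp [key]
    rw [key]; push_cast; ring
  rw [e1] at h
  rw [mul_one_div] at h
  exact h

private lemma oneD2 (L J : ℕ) {z : ℝ} (h0 : 0 ≤ z) (h1 : (J : ℝ) * z < 1) :
    HasSum (fun n : ℕ => ((L + n).factorial : ℝ) / n.factorial * z ^ n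
        * ((n : ℝ) * (J : ℝ) ^ (n - 1)))
      (z * ((L + 1).factorial : ℝ) / (1 - (J : ℝ) * z) ^ (L + 2)) := by
  set a : ℕ → ℝ := fun n => ((L + n).factorial : ℝ) / n.factorial * z ^ n
      * ((n : ℝ) * (J : ℝ) ^ (n - 1)) with ha
  have hq0 : 0 ≤ (J : ℝ) * z := mul_nonneg (Nat.cast_nonneg J) h0
  have hb := (oneD (L + 1) hq0 h1).mul_left z
  have key : (fun m : ℕ => z * (((L + 1 + m).factorial : ℝ) / m.factorial
      * ((J : ℝ) * z) ^ m)) = fun m : ℕ => a (m + 1) := by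
    funext m
    have e1 : L + (m + 1) = L + 1 + m := by ring
    have e2 : ((m + 1).factorial : ℝ) = ((m : ℝ) + 1) * m.factorial := by
      push_cast [Nat.factorial_succ]; ring
    have hm : (m.factorial : ℝ) ≠ 0 := by positivity
    simp only [ha, e1, Nat.add_sub_cancel, e2, mul_pow]
    field_simp
    push_cast; ring
  rw [key] at hb
  have h3 := (hasSum_nat_add_iff (f := a) 1).mp hb
  have ha0 : a 0 = 0 := by simp [ha]
  simpa [ha0, mul_div_assoc] using h3

/-- equal arguments, with a factor `n_J - 1`. -/
theorem stmt_13 (J : ℕ) (hJ : 1 ≤ J) (z : ℝ) (hz0 : 0 ≤ z) (hz : z < 1 / J) (L : ℕ) :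
    Summable (fun v : Fin J → ℕ =>
      |((L + ∑ i, v i).factorial : ℝ) / (∏ i, ((v i).factorial : ℝ))
        * z ^ (∑ i, v i) * ((v ⟨J - 1, by omega⟩ : ℝ) - 1)|) ∧
    (∑' v : Fin J → ℕ,
        ((L + ∑ i, v i).factorial : ℝ) / (∏ i, ((v i).factorial : ℝ))
          * z ^ (∑ i, v i) * ((v ⟨J - 1, by omega⟩ : ℝ) - 1))
      = (L.factorial : ℝ) * (((J:ℝ) + L + 1) * z - 1) / (1 - J * z) ^ (L + 2) := by
  classical
  set j0 : Fin J := ⟨J - 1, by omega⟩ with hj0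
  have hJpos : (0 : ℝ) < J := by exact_mod_cast hJ
  have hq1 : (J : ℝ) * z < 1 := by
    have := (mul_lt_mul_of_pos_left hz hJpos)
    rwa [mul_one_div, div_self (ne_of_gt hJpos)] at this
  have hq0 : 0 ≤ (J : ℝ) * z := mul_nonneg (le_of_lt hJpos) hz0
  have hD : (0:ℝ) < 1 - (J : ℝ) * z := by linarith
  -- the two auxiliary functions
  set g : (Fin J → ℕ) → ℝ := fun v =>
    ((L + ∑ i, v i).factorial : ℝ) / (∏ i, ((v i).factorial : ℝ)) * z ^ (∑ i, v i) with hgdef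
  set h : (Fin J → ℕ) → ℝ := fun v => g v * (v j0 : ℝ) with hhdef
  have hg0 : ∀ v, 0 ≤ g v := by
    intro v
    apply mul_nonneg (div_nonneg (by positivity) (by positivity)) (by positivity)
  have hh0 : ∀ v, 0 ≤ h v := fun v => mul_nonneg (hg0 v) (by positivity)
  -- fiber sums
  have fA : ∀ n : ℕ, ∑ v ∈ piAntidiag (univ : Finset (Fin J)) n, g v
      = ((L + n).factorial : ℝ) / n.factorial * ((J : ℝ) * z) ^ n := by
    intro n
    have hterm : ∀ v ∈ piAntidiag (univ : Finset (Fin J)) n, g v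
        = ((L + n).factorial : ℝ) / n.factorial * z ^ n * (Nat.multinomial univ v : ℝ) := by
      intro v hv
      have hsv : ∑ i, v i = n := (mem_piAntidiag.mp hv).1
      rw [multinomial_real', hsv, hgdef]
      simp only [hsv]
      have h1 : (n.factorial : ℝ) ≠ 0 := by positivity
      have h2 : (∏ i, ((v i).factorial : ℝ)) ≠ 0 := by positivity
      field_simp
    rw [Finset.sum_congr rfl hterm, ← Finset.mul_sum, M1', mul_pow]
    ring
  have fB : ∀ n : ℕ, ∑ v ∈ piAntidiag (univ : Finset (Fin J)) n, h v
      = ((L + n).factorial : ℝ) / n.factorial * z ^ n * ((n : ℝ) * (J : ℝ) ^ (n - 1)) := by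
    intro n
    have hterm : ∀ v ∈ piAntidiag (univ : Finset (Fin J)) n, h v
        = ((L + n).factorial : ℝ) / n.factorial * z ^ n
          * ((Nat.multinomial univ v : ℝ) * (v j0 : ℝ)) := by
      intro v hv
      have hsv : ∑ i, v i = n := (mem_piAntidiag.mp hv).1
      rw [hhdef]
      simp only [hgdef, hsv]
      rw [multinomial_real', hsv]
      have h1 : (n.factorial : ℝ) ≠ 0 := by positivity
      have h2 : (∏ i, ((v i).factorial : ℝ)) ≠ 0 := by positivity
      field_simp
    rw [Finset.sum_congr rfl hterm, ← Finset.mul_sum, M2' J j0 n]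
  -- apply the reduction
  have hsA : Summable (fun n => ∑ v ∈ piAntidiag (univ : Finset (Fin J)) n, g v) := by
    rw [funext fA]
    exact (oneD L hq0 hq1).summable
  have hsB : Summable (fun n => ∑ v ∈ piAntidiag (univ : Finset (Fin J)) n, h v) := by
    rw [funext fB]
    exact (oneD2 L J hz0 hq1).summable
  obtain ⟨hgS, hgT⟩ := fiber_reduce' g hg0 hsA
  obtain ⟨hhS, hhT⟩ := fiber_reduce' h hh0 hsB
  have hgT' : ∑' v, g v = (L.factorial : ℝ) / (1 - (J : ℝ) * z) ^ (L + 1) := by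
    rw [hgT, funext fA]
    exact (oneD L hq0 hq1).tsum_eq
  have hhT' : ∑' v, h v = z * ((L + 1).factorial : ℝ) / (1 - (J : ℝ) * z) ^ (L + 2) := by
    rw [hhT, funext fB]
    exact (oneD2 L J hz0 hq1).tsum_eq
  -- target function is h - g
  have hfun : (fun v : Fin J → ℕ =>
      ((L + ∑ i, v i).factorial : ℝ) / (∏ i, ((v i).factorial : ℝ))
        * z ^ (∑ i, v i) * ((v j0 : ℝ) - 1)) = fun v => h v - g v := by
    funext v
    simp only [hhdef, hgdef]
    ring
  have hSf : Summable (fun v : Fin J → ℕ =>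
      ((L + ∑ i, v i).factorial : ℝ) / (∏ i, ((v i).factorial : ℝ))
        * z ^ (∑ i, v i) * ((v j0 : ℝ) - 1)) := by
    rw [hfun]; exact hhS.sub hgS
  constructor
  · exact hSf.abs
  · rw [hfun, Summable.tsum_sub hhS hgS, hhT', hgT']
    have hfac : ((L + 1).factorial : ℝ) = ((L : ℝ) + 1) * L.factorial := by
      push_cast [Nat.factorial_succ]; ring
    rw [hfac]
    have hDne : (1 - (J : ℝ) * z) ≠ 0 := ne_of_gt hD
    rw [div_sub_div _ _ (pow_ne_zero _ hDne) (pow_ne_zero _ hDne),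
      div_eq_div_iff (mul_ne_zero (pow_ne_zero _ hDne) (pow_ne_zero _ hDne)) (pow_ne_zero _ hDne)]
    ring
end

section
/- Let J ≥ 2 be an integer, let z be a real with 0 ≤ z < 1/J, let L ∈ ℕ, and let I be an index with 1 ≤ I ≤ J−1 (so I ≠ J). Then ∑_{n_1≥0,…,n_J≥0} ((L+n_1+…+n_J)!/(n_1!·…·n_J!))·z^{n_1+…+n_J}·n_I·n_J = (L+2)!·z²/(1−Jz)^{L+3}, the family being summable. -/
open scoped BigOperators

open Finset

private lemma multsum15 (J n : ℕ) :
    ∑ v ∈ Finset.Nat.antidiagonalTuple J n, (Nat.multinomial Finset.univ v : ℝ) = (J : ℝ) ^ n := by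
  have h := Finset.sum_pow_eq_sum_piAntidiag (Finset.univ : Finset (Fin J)) (fun _ => (1 : ℝ)) n
  rw [Finset.piAntidiag_univ_fin_eq_antidiagonalTuple] at h
  simpa using h.symm

private lemma base_hasSum15 (J M : ℕ) (z : ℝ) (hz0 : 0 ≤ z) (hz : (J : ℝ) * z < 1) :
    HasSum (fun v : Fin J → ℕ =>
      ((M + ∑ i, v i).factorial : ℝ) / (∏ i, ((v i).factorial : ℝ)) * z ^ (∑ i, v i))
      ((M.factorial : ℝ) / (1 - (J : ℝ) * z) ^ (M + 1)) := by
  set x : ℝ := (J : ℝ) * z with hxdef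
  have hx : ‖x‖ < 1 := by
    rw [Real.norm_eq_abs, abs_of_nonneg (by positivity)]; exact hz
  set f : (Fin J → ℕ) → ℝ := fun v =>
    ((M + ∑ i, v i).factorial : ℝ) / (∏ i, ((v i).factorial : ℝ)) * z ^ (∑ i, v i) with hf
  have key : ∀ n, ∀ v ∈ Finset.Nat.antidiagonalTuple J n,
      f v = ((M.factorial : ℝ) * (((n + M).choose M : ℕ) : ℝ) * z ^ n) *
        (Nat.multinomial Finset.univ v : ℝ) := by
    intro n v hv
    rw [Finset.Nat.mem_antidiagonalTuple] at hv
    have hms : ((∏ i, ((v i).factorial : ℝ))) * (Nat.multinomial Finset.univ v : ℝ)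
        = (n.factorial : ℝ) := by
      have := Nat.multinomial_spec Finset.univ v
      rw [hv] at this
      exact_mod_cast this
    have h1 : ((M + n).factorial : ℝ)
        = (M.factorial : ℝ) * (((n + M).choose M : ℕ) : ℝ) * (n.factorial : ℝ) := by
      have := Nat.add_choose_mul_factorial_mul_factorial n M
      have h2 : (M + n).factorial = (n + M).choose M * M.factorial * n.factorial := by
        rw [Nat.add_comm M n, ← this]; ring
      rw [h2]; push_cast; ring
    have hP : (0:ℝ) < ∏ i, ((v i).factorial : ℝ) := by positivity
    rw [hf]
    simp only [hv]
    rw [div_mul_eq_mul_div, div_eq_iff hP.ne']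
    linear_combination z ^ n * h1 -
      ((M.factorial : ℝ) * (((n + M).choose M : ℕ) : ℝ) * z ^ n) * hms
  have hfibersum : ∀ n, ∑ v ∈ Finset.Nat.antidiagonalTuple J n, f v
      = (M.factorial : ℝ) * (((n + M).choose M : ℕ) : ℝ) * x ^ n := by
    intro n
    rw [Finset.sum_congr rfl (key n), ← Finset.mul_sum, multsum15, hxdef, mul_pow]
    ring
  have hfiber : ∀ n, HasSum (fun v : Finset.Nat.antidiagonalTuple J n => f v)
      ((M.factorial : ℝ) * (((n + M).choose M : ℕ) : ℝ) * x ^ n) := by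
    intro n
    have h := hasSum_fintype (fun v : Finset.Nat.antidiagonalTuple J n => f v)
    rwa [Finset.sum_coe_sort, hfibersum n] at h
  have houter : HasSum (fun n : ℕ => (M.factorial : ℝ) * (((n + M).choose M : ℕ) : ℝ) * x ^ n)
      ((M.factorial : ℝ) / (1 - x) ^ (M + 1)) := by
    have h := (hasSum_choose_mul_geometric_of_norm_lt_one M hx).mul_left (M.factorial : ℝ)
    simpa [mul_assoc, mul_one_div, div_eq_mul_inv] using h
  have hg0 : ∀ p : (Σ n, Finset.Nat.antidiagonalTuple J n), 0 ≤ f p.2 := by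
    intro p
    exact mul_nonneg (div_nonneg (by positivity) (by positivity)) (pow_nonneg hz0 _)
  have hgsummable : Summable (fun p : (Σ n, Finset.Nat.antidiagonalTuple J n) => f p.2) := by
    refine (summable_sigma_of_nonneg hg0).2 ⟨fun n => (hfiber n).summable, ?_⟩
    refine houter.summable.congr fun n => ?_
    exact ((hfiber n).tsum_eq).symm
  have hsig : HasSum (fun p : (Σ n, Finset.Nat.antidiagonalTuple J n) => f p.2)
      ((M.factorial : ℝ) / (1 - x) ^ (M + 1)) :=
    houter.sigma_of_hasSum hfiber hgsummable
  exact (Finset.Nat.sigmaAntidiagonalTupleEquivTuple J).hasSum_iff.mp hsig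

/-- equal arguments, with a cross factor `n_I · n_J`, `I ≠ J`. -/
theorem stmt_15 (J : ℕ) (hJ : 2 ≤ J) (z : ℝ) (hz0 : 0 ≤ z) (hz : z < 1 / J) (L : ℕ)
    (I : Fin J) (hI : (I : ℕ) < J - 1) :
    Summable (fun v : Fin J → ℕ =>
      ((L + ∑ i, v i).factorial : ℝ) / (∏ i, ((v i).factorial : ℝ))
        * z ^ (∑ i, v i) * (v I : ℝ) * (v ⟨J - 1, by omega⟩ : ℝ)) ∧
    (∑' v : Fin J → ℕ,
        ((L + ∑ i, v i).factorial : ℝ) / (∏ i, ((v i).factorial : ℝ))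
          * z ^ (∑ i, v i) * (v I : ℝ) * (v ⟨J - 1, by omega⟩ : ℝ))
      = ((L + 2).factorial : ℝ) * z ^ 2 / (1 - J * z) ^ (L + 3) := by
  have hJ0 : (0:ℝ) < (J:ℝ) := by positivity
  have hz1 : (J : ℝ) * z < 1 := by
    rw [lt_div_iff₀ hJ0] at hz; linarith [hz]
  set K : Fin J := ⟨J - 1, by omega⟩ with hK
  have hIK : I ≠ K := by
    refine Fin.ne_of_val_ne ?_
    simp only [hK]
    omega
  set f : (Fin J → ℕ) → ℝ := fun v =>
    ((L + ∑ i, v i).factorial : ℝ) / (∏ i, ((v i).factorial : ℝ))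
      * z ^ (∑ i, v i) * (v I : ℝ) * (v K : ℝ) with hf
  set δ : Fin J → ℕ := fun j => (if j = I then 1 else 0) + (if j = K then 1 else 0) with hδ
  set e : (Fin J → ℕ) → (Fin J → ℕ) := fun w j => w j + δ j with he
  have hδI : δ I = 1 := by simp [hδ, hIK]
  have hδK : δ K = 1 := by simp [hδ, hIK.symm]
  have hinj : Function.Injective e := by
    intro a b h
    funext j
    have := congrFun h j
    simpa [he] using this
  have hvanish : ∀ v ∉ Set.range e, f v = 0 := by
    intro v hv
    by_cases hvI : v I = 0
    · simp [hf, hvI]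
    by_cases hvK : v K = 0
    · simp [hf, hvK]
    exfalso
    apply hv
    refine ⟨fun j => v j - δ j, ?_⟩
    funext j
    have hδle : δ j ≤ v j := by
      rcases eq_or_ne j I with rfl | hjI
      · rw [hδI]; omega
      rcases eq_or_ne j K with rfl | hjK
      · rw [hδK]; omega
      · simp [hδ, hjI, hjK]
    simp only [he]
    omega
  have hδsum : ∑ j, δ j = 2 := by
    simp only [hδ]
    rw [Finset.sum_add_distrib]
    simp [Finset.sum_ite_eq', hJ]
  have hcomp : ∀ w : Fin J → ℕ, f (e w) =
      z ^ 2 * (((L + 2 + ∑ i, w i).factorial : ℝ) / (∏ i, ((w i).factorial : ℝ))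
        * z ^ (∑ i, w i)) := by
    intro w
    have hsum : ∑ j, (w j + δ j) = (∑ j, w j) + 2 := by
      rw [Finset.sum_add_distrib, hδsum]
    have hfact : ∀ j, ((w j + δ j).factorial : ℝ)
        = ((w j).factorial : ℝ) * ((w j : ℝ) + 1) ^ (δ j) := by
      intro j
      rcases eq_or_ne j I with rfl | hjI
      · rw [hδI]; push_cast [Nat.factorial_succ]; ring
      rcases eq_or_ne j K with rfl | hjK
      · rw [hδK]; push_cast [Nat.factorial_succ]; ring
      · have : δ j = 0 := by simp [hδ, hjI, hjK]
        rw [this]; simp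
    have hprod : (∏ j, (((w j + δ j)).factorial : ℝ))
        = (∏ j, ((w j).factorial : ℝ)) * (((w I : ℝ) + 1) * ((w K : ℝ) + 1)) := by
      rw [Finset.prod_congr rfl (fun j _ => hfact j), Finset.prod_mul_distrib]
      congr 1
      simp only [hδ, pow_add, pow_ite, pow_one, pow_zero]
      rw [Finset.prod_mul_distrib]
      rw [Finset.prod_ite_eq' Finset.univ I (fun j => (w j : ℝ) + 1)]
      rw [Finset.prod_ite_eq' Finset.univ K (fun j => (w j : ℝ) + 1)]
      simp
    have heI : (e w) I = w I + 1 := by simp [he, hδI]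
    have heK : (e w) K = w K + 1 := by simp [he, hδK]
    have hP : (0:ℝ) < ∏ j, ((w j).factorial : ℝ) := by positivity
    have hwI : (0:ℝ) < (w I : ℝ) + 1 := by positivity
    have hwK : (0:ℝ) < (w K : ℝ) + 1 := by positivity
    simp only [hf, heI, heK]
    rw [show (∑ i, (e w) i) = (∑ j, w j) + 2 from hsum]
    rw [show (∏ i, (((e w) i).factorial : ℝ)) = _ from hprod]
    push_cast
    rw [show L + ((∑ j, w j) + 2) = L + 2 + ∑ j, w j by ring]
    field_simp
    ring
  have hbase := base_hasSum15 J (L + 2) z hz0 hz1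
  have hcs : HasSum (f ∘ e)
      (((L + 2).factorial : ℝ) * z ^ 2 / (1 - (J:ℝ) * z) ^ (L + 3)) := by
    have h := hbase.mul_left (z ^ 2)
    have : z ^ 2 * (((L + 2).factorial : ℝ) / (1 - (J:ℝ) * z) ^ (L + 2 + 1))
        = ((L + 2).factorial : ℝ) * z ^ 2 / (1 - (J:ℝ) * z) ^ (L + 3) := by
      rw [show L + 2 + 1 = L + 3 from rfl]; ring
    rw [this] at h
    have hfe : (f ∘ e) = fun w => z ^ 2 *
        (((L + 2 + ∑ i, w i).factorial : ℝ) / (∏ i, ((w i).factorial : ℝ)) * z ^ (∑ i, w i)) :=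
      funext hcomp
    rw [hfe]
    exact h
  have hmain : HasSum f (((L + 2).factorial : ℝ) * z ^ 2 / (1 - (J:ℝ) * z) ^ (L + 3)) :=
    (hinj.hasSum_iff hvanish).mp hcs
  exact ⟨hmain.summable, hmain.tsum_eq⟩
end

section
/- Let n, k be integers with 3 ≤ n ≤ k, and let j be an integer with 1 ≤ j ≤ n−2. Then (j+1)·C(k−n+j+1, k−n)·∑_{l=1}^{j} C(j,l)·(−1)^{l}·l·(k−n+l)/(k−n+l+1)² + 1 = −(k−n) + (k−n+1)·∑_{i=2}^{j+1} 1/(k−n+i). -/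
open scoped BigOperators

lemma pascal_sum (j : ℕ) (g : ℕ → ℝ) :
    ∑ l ∈ Finset.range (j+2), (((j+1).choose l : ℝ)) * (-1)^l * g l
      = ∑ l ∈ Finset.range (j+1), ((j.choose l : ℝ)) * (-1)^l * g l
        - ∑ l ∈ Finset.range (j+1), ((j.choose l : ℝ)) * (-1)^l * g (l+1) := by
  have hshift : ∑ l ∈ Finset.range (j+1), ((j.choose (l+1) : ℝ)) * (-1)^(l+1) * g (l+1)
      = ∑ l ∈ Finset.range (j+1), ((j.choose l : ℝ)) * (-1)^l * g l
        - ((j.choose 0 : ℝ)) * (-1)^0 * g 0 := by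
    have h := Finset.sum_range_succ' (fun l => ((j.choose l : ℝ)) * (-1)^l * g l) (j+1)
    have h2 := Finset.sum_range_succ (fun l => ((j.choose l : ℝ)) * (-1)^l * g l) (j+1)
    simp only [Nat.choose_succ_self, Nat.cast_zero, zero_mul] at h2
    rw [h2] at h
    simp only [zero_mul, add_zero] at h
    linarith [h]
  rw [Finset.sum_range_succ' (fun l => (((j+1).choose l : ℝ)) * (-1)^l * g l) (j+1)]
  simp only [Nat.choose_succ_succ, Nat.cast_add, pow_succ]
  rw [Finset.sum_congr rfl (fun l _ => by ring :
    ∀ l ∈ Finset.range (j+1), ((j.choose l : ℝ) + (j.choose (l+1) : ℝ)) * ((-1)^l * (-1)) * g (l+1)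
      = ((j.choose (l+1) : ℝ)) * (-1)^(l+1) * g (l+1) + (-1) * (((j.choose l : ℝ)) * (-1)^l * g (l+1)))]
  rw [Finset.sum_add_distrib, hshift, ← Finset.mul_sum]
  simp
  ring



lemma lemA (j : ℕ) : ∀ m : ℕ,
    ∑ l ∈ Finset.range (j+1), ((j.choose l : ℝ)) * (-1)^l * (1 / ((m:ℝ)+l+1))
      = (j.factorial : ℝ) * (m.factorial : ℝ) / ((m+j+1).factorial : ℝ) := by
  induction j with
  | zero =>
    intro m
    simp [Nat.factorial_succ]
    rw [eq_div_iff (by positivity)]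
    field_simp
  | succ j ih =>
    intro m
    have h := pascal_sum j (fun l => 1 / ((m:ℝ)+l+1))
    rw [h, ih m]
    have h2 : ∑ l ∈ Finset.range (j+1), ((j.choose l : ℝ)) * (-1)^l * (1 / ((m:ℝ)+((l:ℕ):ℝ)+1+1))
        = (j.factorial : ℝ) * ((m+1).factorial : ℝ) / ((m+1+j+1).factorial : ℝ) := by
      rw [← ih (m+1)]
      apply Finset.sum_congr rfl
      intro l _
      push_cast
      ring_nf
    have h3 : ∑ l ∈ Finset.range (j+1), ((j.choose l : ℝ)) * (-1)^l * (1 / ((m:ℝ)+((l+1:ℕ):ℝ)+1))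
        = (j.factorial : ℝ) * ((m+1).factorial : ℝ) / ((m+1+j+1).factorial : ℝ) := by
      rw [← h2]; apply Finset.sum_congr rfl; intro l _; push_cast; ring_nf
    rw [h3]
    have e1 : (m+1+j+1) = (m+j+1)+1 := by ring
    have e2 : (m+(j+1)+1) = (m+j+1)+1 := by ring
    rw [e1, e2, Nat.factorial_succ (m+j+1), Nat.factorial_succ j]
    have p1 : ((m+j+1).factorial : ℝ) ≠ 0 := by positivity
    have p2 : ((m:ℝ)+j+1+1) ≠ 0 := by positivity
    rw [Nat.factorial_succ m]
    push_cast
    field_simp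
    ring



lemma lemB (j : ℕ) : ∀ m : ℕ,
    ∑ l ∈ Finset.range (j+1), ((j.choose l : ℝ)) * (-1)^l * (1 / ((m:ℝ)+l+1)^2)
      = ((j.factorial : ℝ) * (m.factorial : ℝ) / ((m+j+1).factorial : ℝ))
        * ∑ i ∈ Finset.range (j+1), 1 / ((m:ℝ)+i+1) := by
  induction j with
  | zero =>
    intro m
    have hf : ((m+0+1).factorial : ℝ) = ((m:ℝ)+1) * (m.factorial:ℝ) := by
      rw [show m+0+1 = m+1 from rfl, Nat.factorial_succ]; push_cast; ring
    simp only [Finset.sum_range_one, hf]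
    have p : (m.factorial:ℝ) ≠ 0 := by positivity
    have p2 : ((m:ℝ)+1) ≠ 0 := by positivity
    norm_num
    field_simp
  | succ j ih =>
    intro m
    have h := pascal_sum j (fun l => 1 / ((m:ℝ)+l+1)^2)
    rw [h]
    have h3 : ∑ l ∈ Finset.range (j+1), ((j.choose l : ℝ)) * (-1)^l * (1 / ((m:ℝ)+((l+1:ℕ):ℝ)+1)^2)
        = ((j.factorial : ℝ) * ((m+1).factorial : ℝ) / ((m+1+j+1).factorial : ℝ))
          * ∑ i ∈ Finset.range (j+1), 1 / (((m+1:ℕ):ℝ)+i+1) := by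
      rw [← ih (m+1)]; apply Finset.sum_congr rfl; intro l _; push_cast; ring_nf
    rw [ih m, h3]
    -- harmonic sum relations
    have hH1 : ∑ i ∈ Finset.range (j+2), 1 / ((m:ℝ)+i+1)
        = (∑ i ∈ Finset.range (j+1), 1 / ((m:ℝ)+i+1)) + 1/((m:ℝ)+j+2) := by
      rw [Finset.sum_range_succ]
      congr 1
      push_cast; ring
    have hH2 : ∑ i ∈ Finset.range (j+1), 1 / (((m+1:ℕ):ℝ)+i+1)
        = (∑ i ∈ Finset.range (j+1), 1 / ((m:ℝ)+i+1)) + 1/((m:ℝ)+j+2) - 1/((m:ℝ)+1) := by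
      have h4 := Finset.sum_range_succ' (fun i => 1 / ((m:ℝ)+i+1)) (j+1)
      have h4b := Finset.sum_range_succ (fun i => 1 / ((m:ℝ)+i+1)) (j+1)
      have h5 : ∑ i ∈ Finset.range (j+1), 1 / ((m:ℝ)+((i+1:ℕ):ℝ)+1)
          = ∑ i ∈ Finset.range (j+1), 1 / (((m+1:ℕ):ℝ)+i+1) := by
        apply Finset.sum_congr rfl; intro l _; push_cast; ring_nf
      have h6 : (1:ℝ)/((m:ℝ)+((j+1:ℕ):ℝ)+1) = 1/((m:ℝ)+(j:ℝ)+2) := by push_cast; ring_nf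
      have h7 : (1:ℝ)/((m:ℝ)+((0:ℕ):ℝ)+1) = 1/((m:ℝ)+1) := by norm_num
      rw [h4b] at h4
      rw [h5, h6, h7] at h4
      linarith [h4]
    rw [hH1, hH2]
    set H := ∑ i ∈ Finset.range (j+1), 1 / ((m:ℝ)+i+1) with hHdef
    have e1 : (m+1+j+1) = (m+j+1)+1 := by ring
    have e2 : (m+(j+1)+1) = (m+j+1)+1 := by ring
    rw [e1, e2, Nat.factorial_succ (m+j+1), Nat.factorial_succ j, Nat.factorial_succ m]
    have p1 : ((m+j+1).factorial : ℝ) ≠ 0 := by positivity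
    have p2 : ((m:ℝ)+j+2) ≠ 0 := by positivity
    have p3 : ((m:ℝ)+1) ≠ 0 := by positivity
    have e3 : (((m+j+1)+1 : ℕ) : ℝ) = (m:ℝ)+j+2 := by push_cast; ring
    push_cast
    field_simp
    ring

/-- the closed form of `T_j` (Lemma on the drift coefficient). -/
theorem stmt_17 (n k : ℕ) (hn : 3 ≤ n) (hk : n ≤ k)
    (j : ℕ) (hj1 : 1 ≤ j) (hj2 : j ≤ n - 2) :
    ((j:ℝ) + 1) * ((k - n + j + 1).choose (k - n) : ℝ)
        * (∑ l ∈ Finset.Icc 1 j,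
            (j.choose l : ℝ) * (-1) ^ l * (l : ℝ) * ((k:ℝ) - n + l)
              / ((k:ℝ) - n + l + 1) ^ 2)
      + 1
    = -((k:ℝ) - n) + ((k:ℝ) - n + 1) * ∑ i ∈ Finset.Icc 2 (j + 1), 1 / ((k:ℝ) - n + i) := by
  rw [show (k:ℝ) - n = ((k - n : ℕ):ℝ) from (Nat.cast_sub hk).symm]
  set m := k - n with hm
  -- abbreviations
  set c : ℝ := (j.factorial : ℝ) * (m.factorial : ℝ) / ((m+j+1).factorial : ℝ) with hc
  set H : ℝ := ∑ i ∈ Finset.range (j+1), 1/((m:ℝ) + i + 1) with hH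
  have hx1 : ((m:ℝ)+1) ≠ 0 := by positivity
  have hfm : ((m.factorial : ℝ)) ≠ 0 := by positivity
  have hfj : ((j.factorial : ℝ)) ≠ 0 := by positivity
  have hfmj : (((m+j+1).factorial : ℝ)) ≠ 0 := by positivity
  -- key choose identity
  have hchoose : ((m+j+1).choose m : ℝ) * (m.factorial : ℝ) * ((j+1).factorial : ℝ)
      = ((m+j+1).factorial : ℝ) := by
    have h := Nat.choose_mul_factorial_mul_factorial (show m ≤ m+j+1 by omega)
    rw [show m+j+1-m = j+1 by omega] at h
    exact_mod_cast congrArg (Nat.cast : ℕ → ℝ) h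
  have key : ((j:ℝ)+1) * ((m+j+1).choose m : ℝ) * c = 1 := by
    have hfact : (((j+1).factorial : ℕ) : ℝ) = ((j:ℝ)+1) * (j.factorial : ℝ) := by
      rw [Nat.factorial_succ]; push_cast; ring
    rw [hfact] at hchoose
    rw [hc]
    field_simp
    linear_combination hchoose
  -- shift lemma
  have shift : ∀ g : ℕ → ℝ,
      ∑ l ∈ Finset.range j, (j.choose (l+1):ℝ) * (-1)^(l+1) * g (l+1)
        = (∑ l ∈ Finset.range (j+1), (j.choose l:ℝ) * (-1)^l * g l) - g 0 := by
    intro g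
    have h := Finset.sum_range_succ' (fun l => (j.choose l:ℝ) * (-1)^l * g l) j
    simp only [Nat.choose_zero_right, Nat.cast_one, pow_zero, one_mul] at h
    linarith [h]
  -- the three full alternating sums
  have hS0 : ∑ l ∈ Finset.range (j+1), (j.choose l : ℝ) * (-1)^l * (fun _ : ℕ => (1:ℝ)) l = 0 := by
    have h := Int.alternating_sum_range_choose (n := j)
    rw [if_neg (by omega : j ≠ 0)] at h
    have h2 : ∑ i ∈ Finset.range (j+1), ((-1:ℝ))^i * ((j.choose i : ℕ) : ℝ) = 0 := by
      exact_mod_cast congrArg (fun z : ℤ => (z : ℝ)) h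
    simp only [mul_one]
    calc ∑ l ∈ Finset.range (j+1), (j.choose l : ℝ) * (-1)^l
        = ∑ l ∈ Finset.range (j+1), (-1:ℝ)^l * (j.choose l : ℝ) := by
          apply Finset.sum_congr rfl; intro l _; ring
      _ = 0 := h2
  have hSA : ∑ l ∈ Finset.range (j+1), (j.choose l : ℝ) * (-1)^l * (fun l : ℕ => 1/((m:ℝ)+l+1)) l = c :=
    lemA j m
  have hSB : ∑ l ∈ Finset.range (j+1), (j.choose l : ℝ) * (-1)^l * (fun l : ℕ => 1/((m:ℝ)+l+1)^2) l = c * H :=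
    lemB j m
  -- LHS sum conversion
  have hL : ∑ l ∈ Finset.Icc 1 j,
        (j.choose l : ℝ) * (-1) ^ l * (l : ℝ) * ((m:ℝ) + l) / ((m:ℝ) + l + 1) ^ 2
      = -1 - ((m:ℝ)+2) * (c - 1/((m:ℝ)+1)) + ((m:ℝ)+1) * (c*H - 1/((m:ℝ)+1)^2) := by
    rw [← Finset.Ico_add_one_right_eq_Icc, Finset.sum_Ico_eq_sum_range]
    rw [show j+1-1 = j by omega]
    have hsplit : ∀ l, l ∈ Finset.range j →
        (j.choose (1+l) : ℝ) * (-1) ^ (1+l) * ((1+l:ℕ) : ℝ) * ((m:ℝ) + ((1+l:ℕ):ℝ)) / ((m:ℝ) + ((1+l:ℕ):ℝ) + 1) ^ 2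
        = ((j.choose (l+1) : ℝ) * (-1)^(l+1) * (fun _ : ℕ => (1:ℝ)) (l+1))
          - ((m:ℝ)+2) * ((j.choose (l+1) : ℝ) * (-1)^(l+1) * (fun l : ℕ => 1/((m:ℝ)+l+1)) (l+1))
          + ((m:ℝ)+1) * ((j.choose (l+1) : ℝ) * (-1)^(l+1) * (fun l : ℕ => 1/((m:ℝ)+l+1)^2) (l+1)) := by
      intro l _
      have hne : (m:ℝ) + ((l+1:ℕ):ℝ) + 1 ≠ 0 := by push_cast; positivity
      rw [show 1+l = l+1 by omega]
      simp only []
      push_cast at hne ⊢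
      field_simp
      ring
    rw [Finset.sum_congr rfl hsplit]
    rw [Finset.sum_add_distrib, Finset.sum_sub_distrib, ← Finset.mul_sum, ← Finset.mul_sum]
    rw [shift (fun _ : ℕ => (1:ℝ)), shift (fun l : ℕ => 1/((m:ℝ)+l+1)),
      shift (fun l : ℕ => 1/((m:ℝ)+l+1)^2), hS0, hSA, hSB]
    push_cast
    ring
  -- RHS sum conversion
  have hR : ∑ i ∈ Finset.Icc 2 (j+1), 1 / ((m:ℝ) + i) = H - 1/((m:ℝ)+1) := by
    rw [← Finset.Ico_add_one_right_eq_Icc, Finset.sum_Ico_eq_sum_range]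
    rw [show j+1+1-2 = j by omega]
    have h := Finset.sum_range_succ' (fun i => 1/((m:ℝ)+i+1)) j
    rw [hH, h]
    have : ∀ i, i ∈ Finset.range j → (1:ℝ) / ((m:ℝ) + ((2+i:ℕ):ℝ)) = (fun i : ℕ => 1/((m:ℝ)+i+1)) (i+1) := by
      intro i _; simp only []; push_cast; ring_nf
    rw [Finset.sum_congr rfl this]
    simp only [Nat.cast_zero]
    ring
  rw [hL, hR]
  have hinner : -1 - ((m:ℝ)+2) * (c - 1/((m:ℝ)+1)) + ((m:ℝ)+1) * (c*H - 1/((m:ℝ)+1)^2)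
      = c * (-((m:ℝ)+2) + ((m:ℝ)+1)*H) := by
    field_simp
    ring
  rw [hinner]
  have h2 : ((m:ℝ)+1) * (H - 1/((m:ℝ)+1)) = ((m:ℝ)+1)*H - 1 := by
    field_simp
  rw [h2]
  linear_combination (-((m:ℝ)+2) + ((m:ℝ)+1)*H) * key
end
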